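/- arXiv:math/0502352 — 15 statements merged into one kernel-verified Lean document; each statement's English description precedes it below -/
import Mathlib

section
/- Let K be an algebraically closed field, V a nonzero finite-dimensional K-vector space, n ≥ 1 an integer, λ ∈ K a primitive n-th root of unity, and a, b invertible K-linear endomorphisms of V satisfying a ∘ b = λ • (b ∘ a). If the only K-subspaces of V invariant under both a and b are 0 and V, then dim_K V = n. -/
/-- If `a, b` are invertible endomorphisms of a nonzero finite-dimensional
vector space over an algebraically closed field with `a ∘ b = λ • (b ∘ a)` for a primitive
`n`-th root of unity `λ`, and the only subspaces invariant under both `a` and `b` are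
`0` and `V`, then `dim V = n`. -/
theorem stmt_1 {K V : Type*} [Field K] [IsAlgClosed K]
    [AddCommGroup V] [Module K V] [FiniteDimensional K V] [Nontrivial V]
    (n : ℕ) (hn : 1 ≤ n) (lam : K) (hlam : lam ^ n = 1)
    (hprim : ∀ m : ℕ, 1 ≤ m → m < n → lam ^ m ≠ 1)
    (a b : V ≃ₗ[K] V)
    (hrel : a.toLinearMap ∘ₗ b.toLinearMap = lam • (b.toLinearMap ∘ₗ a.toLinearMap))
    (hsimple : ∀ p : Submodule K V,
      (∀ x ∈ p, a x ∈ p) → (∀ x ∈ p, b x ∈ p) → p = ⊥ ∨ p = ⊤) :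
    Module.finrank K V = n := by
  have hlam0 : lam ≠ 0 := by
    intro h
    rw [h, zero_pow (by omega)] at hlam
    exact zero_ne_one hlam
  -- pointwise relation
  have hrel' : ∀ x : V, a (b x) = lam • b (a x) := by
    intro x
    have := LinearMap.ext_iff.mp hrel x
    simpa using this
  -- relation for powers of b
  have hrelk : ∀ (k : ℕ) (x : V), a ((b ^ k) x) = lam ^ k • (b ^ k) (a x) := by
    intro k
    induction k with
    | zero => intro x; simp
    | succ k ih =>
      intro x
      have h1 : (b ^ (k + 1)) x = b ((b ^ k) x) := by
        rw [pow_succ' b k]; rfl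
      have h2 : (b ^ (k + 1)) (a x) = b ((b ^ k) (a x)) := by
        rw [pow_succ' b k]; rfl
      rw [h1, h2, hrel' ((b ^ k) x), ih x, map_smul, smul_smul, pow_succ']
  -- eigenvalue of a
  obtain ⟨μ, hμ⟩ := Module.End.exists_eigenvalue (a.toLinearMap : Module.End K V)
  obtain ⟨v, hv⟩ := hμ.exists_hasEigenvector
  have hv0 : v ≠ 0 := hv.right
  have hav : a v = μ • v := hv.apply_eq_smul
  have hμ0 : μ ≠ 0 := by
    intro h
    apply hv0
    have : a v = 0 := by rw [hav, h, zero_smul]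
    have := a.injective (by simpa using this)
    exact this
  -- the vectors w k = b^k v
  set w : ℕ → V := fun k => (b ^ k) v with hw
  have hwzero : w 0 = v := by simp [hw]
  have hwsucc : ∀ k, w (k + 1) = b (w k) := by
    intro k; rw [hw]; simp only; rw [pow_succ' b k]; rfl
  have hweig : ∀ k, a (w k) = (lam ^ k * μ) • w k := by
    intro k
    rw [hw]
    simp only
    rw [hrelk k v, hav, map_smul, smul_smul]
  have hwne : ∀ k, w k ≠ 0 := by
    intro k h
    exact hv0 ((b ^ k).map_eq_zero_iff.mp h)
  -- b^n is a scalar γ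
  have hcomm : ∀ x : V, a ((b ^ n) x) = (b ^ n) (a x) := by
    intro x; rw [hrelk n x, hlam, one_smul]
  obtain ⟨γ, hγ⟩ := Module.End.exists_eigenvalue ((b ^ n).toLinearMap : Module.End K V)
  have hbn : ∀ x : V, (b ^ n) x = γ • x := by
    set p := Module.End.eigenspace ((b ^ n).toLinearMap : Module.End K V) γ with hp
    have hmem : ∀ x : V, x ∈ p ↔ (b ^ n) x = γ • x := by
      intro x
      rw [hp, Module.End.mem_eigenspace_iff]
      rfl
    have hpa : ∀ x ∈ p, a x ∈ p := by
      intro x hx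
      rw [hmem] at hx ⊢
      rw [← hcomm x, hx, map_smul]
    have hpb : ∀ x ∈ p, b x ∈ p := by
      intro x hx
      rw [hmem] at hx ⊢
      have : (b ^ n) (b x) = b ((b ^ n) x) := by
        have h1 : (b ^ (n + 1)) x = b ((b ^ n) x) := by rw [pow_succ' b n]; rfl
        have h2 : (b ^ (n + 1)) x = (b ^ n) (b x) := by rw [pow_succ b n]; rfl
        rw [← h1, h2]
      rw [this, hx, map_smul]
    rcases hsimple p hpa hpb with h | h
    · exact absurd h hγ
    · intro x
      have : x ∈ p := h ▸ Submodule.mem_top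
      exact (hmem x).mp this
  -- span of the w k, k < n
  set q : Submodule K V := Submodule.span K (Set.range fun k : Fin n => w k) with hq
  have hwq : ∀ k : Fin n, w k ∈ q := fun k =>
    Submodule.subset_span ⟨k, rfl⟩
  have hqa : ∀ x ∈ q, a x ∈ q := by
    intro x hx
    induction hx using Submodule.span_induction with
    | mem y hy =>
      obtain ⟨k, rfl⟩ := hy
      rw [hweig k]
      exact q.smul_mem _ (hwq k)
    | zero => simpa using q.zero_mem
    | add y z _ _ hy hz => rw [map_add]; exact q.add_mem hy hz
    | smul c y _ hy => rw [map_smul]; exact q.smul_mem c hy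
  have hqb : ∀ x ∈ q, b x ∈ q := by
    intro x hx
    induction hx using Submodule.span_induction with
    | mem y hy =>
      obtain ⟨k, rfl⟩ := hy
      rw [← hwsucc k]
      by_cases hk : (k : ℕ) + 1 < n
      · exact hwq ⟨(k : ℕ) + 1, hk⟩
      · have hkn : (k : ℕ) + 1 = n := by omega
        have : w ((k : ℕ) + 1) = γ • v := by
          rw [hkn, hw]; simp only; exact hbn v
        rw [this, ← hwzero]
        exact q.smul_mem _ (hwq ⟨0, by omega⟩)
    | zero => simpa using q.zero_mem
    | add y z _ _ hy hz => rw [map_add]; exact q.add_mem hy hz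
    | smul c y _ hy => rw [map_smul]; exact q.smul_mem c hy
  have hqtop : q = ⊤ := by
    rcases hsimple q hqa hqb with h | h
    · exfalso
      apply hv0
      have : v ∈ q := by rw [← hwzero]; exact hwq ⟨0, by omega⟩
      rw [h] at this
      simpa using this
    · exact h
  -- linear independence
  have hinj : Function.Injective (fun k : Fin n => lam ^ (k : ℕ) * μ) := by
    intro i j hij
    simp only at hij
    have h1 : lam ^ (i : ℕ) = lam ^ (j : ℕ) := mul_right_cancel₀ hμ0 hij
    by_contra hne
    have hne' : (i : ℕ) ≠ (j : ℕ) := fun h => hne (Fin.ext h)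
    rcases Nat.lt_or_ge (i : ℕ) (j : ℕ) with hlt | hge
    · have : lam ^ ((j : ℕ) - (i : ℕ)) = 1 := by
        rw [pow_sub₀ lam hlam0 (le_of_lt hlt), h1, mul_inv_cancel₀ (pow_ne_zero _ hlam0)]
      exact hprim _ (by omega) (by omega) this
    · have hlt : (j : ℕ) < (i : ℕ) := by omega
      have : lam ^ ((i : ℕ) - (j : ℕ)) = 1 := by
        rw [pow_sub₀ lam hlam0 (le_of_lt hlt), ← h1, mul_inv_cancel₀ (pow_ne_zero _ hlam0)]
      exact hprim _ (by omega) (by omega) this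
  have hli : LinearIndependent K (fun k : Fin n => w k) := by
    apply Module.End.eigenvectors_linearIndependent' (a.toLinearMap : Module.End K V)
      (fun k : Fin n => lam ^ (k : ℕ) * μ) hinj
    intro i
    constructor
    · rw [Module.End.mem_eigenspace_iff]
      exact hweig i
    · exact hwne i
  -- conclude
  let bas : Module.Basis (Fin n) K V := Module.Basis.mk hli (by rw [← hq, hqtop])
  rw [Module.finrank_eq_card_basis bas, Fintype.card_fin]
end

section
/- With R = ℂ[t_1,…,t_n] and σ_1, …, σ_n the ℂ-algebra endomorphisms of R determined on generators by σ_i(t_j) = t_j for j < i, σ_i(t_i) = 1 + q_i t_i + Σ_{k=1}^{i−1}(q_k − 1)t_k, and σ_i(t_j) = q_i t_j for j > i: each σ_i is bijective (hence an automorphism of R), and the σ_i pairwise commute, i.e. σ_i ∘ σ_j = σ_j ∘ σ_i for all i, j. -/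
/-!
Each `σ i` is triangular with respect to the order of the variables: it fixes `t j` for `j < i`,
sends `t i` to `q i t i` plus a polynomial in the earlier variables, and scales the later ones
by `q i`; so for `q i` invertible its inverse can be written down on generators.
For commutation it suffices to compare `σ i ∘ σ j` and `σ j ∘ σ i` on the generators, and for
`i < j` the only nontrivial generator is `t j`. With `S j = ∑_{k<j} (q k - 1) t k` one finds
`σ i (S j) = q i S j + q i - 1`, i.e. `σ i` multiplies `1 + q j t j + S j = σ j (t j)` by `q i`,
exactly as `σ j` does with `σ i (t j) = q i t j`.
-/

open MvPolynomial

namespace QuantizedWeyl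

open Finset

theorem algHom_apply_C {ι R : Type*} [CommRing R] (f : MvPolynomial ι R →ₐ[R] MvPolynomial ι R)
    (c : R) : f (C c) = C c :=
  MvPolynomial.algHom_C f c

variable {ι : Type*} [LinearOrder ι] [LocallyFiniteOrderBot ι]

section CommRing

variable {R : Type*} [CommRing R]

noncomputable def lowerSum (q : ι → R) (i : ι) : MvPolynomial ι R :=
  ∑ k ∈ Iio i, C (q k - 1) * X k

noncomputable def sigma (q : ι → R) (i : ι) : MvPolynomial ι R →ₐ[R] MvPolynomial ι R :=
  aeval fun j => if j < i then X j else if j = i then 1 + C (q i) * X i + lowerSum q i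
    else C (q i) * X j

variable (q : ι → R)

theorem sigma_X_of_lt {i j : ι} (h : j < i) : sigma q i (X j) = X j := by
  rw [sigma, aeval_X, if_pos h]

theorem sigma_X_self (i : ι) : sigma q i (X i) = 1 + C (q i) * X i + lowerSum q i := by
  rw [sigma, aeval_X, if_neg (lt_irrefl i), if_pos rfl]

theorem sigma_X_of_gt {i j : ι} (h : i < j) : sigma q i (X j) = C (q i) * X j := by
  rw [sigma, aeval_X, if_neg h.not_gt, if_neg h.ne']

theorem sigma_lowerSum_of_le {i j : ι} (h : i ≤ j) :
    sigma q j (lowerSum q i) = lowerSum q i := by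
  simp only [lowerSum, map_sum, map_mul, algHom_apply_C]
  exact sum_congr rfl fun k hk => by rw [sigma_X_of_lt q ((mem_Iio.mp hk).trans_le h)]

theorem sigma_summand (i k : ι) :
    sigma q i (C (q k - 1) * X k) = C (q i) * (C (q k - 1) * X k)
      + ((if k < i then (1 - C (q i)) * (C (q k - 1) * X k) else 0)
        + (if k = i then (C (q i) - 1) * (1 + lowerSum q i) else 0)) := by
  rw [map_mul, algHom_apply_C]
  rcases lt_trichotomy k i with h | rfl | h
  · rw [sigma_X_of_lt q h, if_pos h, if_neg h.ne]; ring
  · rw [sigma_X_self, if_neg (lt_irrefl k), if_pos rfl, map_sub, map_one]; ring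
  · rw [sigma_X_of_gt q h, if_neg h.not_gt, if_neg h.ne']; ring

theorem sigma_lowerSum_of_lt {i j : ι} (h : i < j) :
    sigma q i (lowerSum q j) = C (q i) * lowerSum q j + C (q i) - 1 := by
  have below : ∑ k ∈ Iio j, (if k < i then (1 - C (q i)) * (C (q k - 1) * X k) else 0)
      = (1 - C (q i)) * lowerSum q i := by
    rw [lowerSum, mul_sum,
      ← sum_subset (Iio_subset_Iio h.le) fun k _ hk => if_neg (by simpa using hk)]
    exact sum_congr rfl fun k hk => if_pos (mem_Iio.mp hk)
  have at_i : ∑ k ∈ Iio j, (if k = i then (C (q i) - 1) * (1 + lowerSum q i) else 0)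
      = (C (q i) - 1) * (1 + lowerSum q i) := by
    rw [sum_ite_eq', if_pos (mem_Iio.mpr h)]
  calc sigma q i (lowerSum q j)
      = C (q i) * lowerSum q j + ((1 - C (q i)) * lowerSum q i
          + (C (q i) - 1) * (1 + lowerSum q i)) := by
        conv_lhs => rw [lowerSum, map_sum]
        rw [sum_congr rfl fun k _ => sigma_summand q i k, sum_add_distrib, sum_add_distrib,
          below, at_i, ← mul_sum]
        rfl
    _ = C (q i) * lowerSum q j + C (q i) - 1 := by ring

theorem sigma_comm_of_lt {i j : ι} (h : i < j) :
    (sigma q i).comp (sigma q j) = (sigma q j).comp (sigma q i) := by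
  refine algHom_ext fun m => ?_
  simp only [AlgHom.comp_apply]
  rcases lt_trichotomy m i with hm | rfl | hm
  · rw [sigma_X_of_lt q (hm.trans h), sigma_X_of_lt q hm, sigma_X_of_lt q (hm.trans h)]
  · rw [sigma_X_of_lt q h, sigma_X_self, map_add, map_add, map_one, map_mul, algHom_apply_C,
      sigma_X_of_lt q h, sigma_lowerSum_of_le q h.le]
  rcases lt_trichotomy m j with hm' | rfl | hm'
  · rw [sigma_X_of_lt q hm', sigma_X_of_gt q hm, map_mul, algHom_apply_C, sigma_X_of_lt q hm']
  · rw [sigma_X_self, sigma_X_of_gt q hm, map_add, map_add, map_one, map_mul, algHom_apply_C,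
      sigma_X_of_gt q hm, sigma_lowerSum_of_lt q hm, map_mul, algHom_apply_C, sigma_X_self]
    ring
  · rw [sigma_X_of_gt q hm', map_mul, algHom_apply_C, sigma_X_of_gt q hm, map_mul, algHom_apply_C,
      sigma_X_of_gt q hm']
    ring

theorem sigma_comm (i j : ι) : (sigma q i).comp (sigma q j) = (sigma q j).comp (sigma q i) := by
  rcases lt_trichotomy i j with h | rfl | h
  · exact sigma_comm_of_lt q h
  · rfl
  · exact (sigma_comm_of_lt q h).symm

end CommRing

section Field

variable {K : Type*} [Field K] (q : ι → K)

noncomputable def sigmaInv (i : ι) : MvPolynomial ι K →ₐ[K] MvPolynomial ι K :=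
  aeval fun j => if j < i then X j else if j = i then C (q i)⁻¹ * (X i - 1 - lowerSum q i)
    else C (q i)⁻¹ * X j

theorem sigmaInv_lowerSum (i : ι) : sigmaInv q i (lowerSum q i) = lowerSum q i := by
  simp only [lowerSum, map_sum, map_mul, algHom_apply_C]
  exact sum_congr rfl fun k hk => by rw [sigmaInv, aeval_X, if_pos (mem_Iio.mp hk)]

variable {q}

theorem sigmaInv_comp_sigma (hq : ∀ i, q i ≠ 0) (i : ι) :
    (sigmaInv q i).comp (sigma q i) = AlgHom.id K _ := by
  refine algHom_ext fun m => ?_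
  simp only [AlgHom.comp_apply, AlgHom.id_apply]
  rcases lt_trichotomy m i with h | rfl | h
  · rw [sigma_X_of_lt q h, sigmaInv, aeval_X, if_pos h]
  · rw [sigma_X_self, map_add, map_add, map_one, map_mul, algHom_apply_C, sigmaInv_lowerSum,
      sigmaInv, aeval_X, if_neg (lt_irrefl m), if_pos rfl, ← mul_assoc, ← C_mul,
      mul_inv_cancel₀ (hq m), C_1]
    ring
  · rw [sigma_X_of_gt q h, map_mul, algHom_apply_C, sigmaInv, aeval_X, if_neg h.not_gt,
      if_neg h.ne', ← mul_assoc, ← C_mul, mul_inv_cancel₀ (hq i), C_1, one_mul]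

theorem sigma_comp_sigmaInv (hq : ∀ i, q i ≠ 0) (i : ι) :
    (sigma q i).comp (sigmaInv q i) = AlgHom.id K _ := by
  refine algHom_ext fun m => ?_
  simp only [AlgHom.comp_apply, AlgHom.id_apply, sigmaInv, aeval_X]
  rcases lt_trichotomy m i with h | rfl | h
  · rw [if_pos h, sigma_X_of_lt q h]
  · rw [if_neg (lt_irrefl m), if_pos rfl, map_mul, algHom_apply_C, map_sub, map_sub, map_one,
      sigma_X_self, sigma_lowerSum_of_le q le_rfl,
      show 1 + C (q m) * X m + lowerSum q m - 1 - lowerSum q m = C (q m) * X m by ring,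
      ← mul_assoc, ← C_mul, inv_mul_cancel₀ (hq m), C_1, one_mul]
  · rw [if_neg h.not_gt, if_neg h.ne', map_mul, algHom_apply_C, sigma_X_of_gt q h, ← mul_assoc,
      ← C_mul, inv_mul_cancel₀ (hq i), C_1, one_mul]

noncomputable def sigmaEquiv (hq : ∀ i, q i ≠ 0) (i : ι) :
    MvPolynomial ι K ≃ₐ[K] MvPolynomial ι K :=
  AlgEquiv.ofAlgHom (sigma q i) (sigmaInv q i) (sigma_comp_sigmaInv hq i) (sigmaInv_comp_sigma hq i)

theorem sigma_bijective (hq : ∀ i, q i ≠ 0) (i : ι) : Function.Bijective (sigma q i) :=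
  (sigmaEquiv hq i).bijective

end Field

end QuantizedWeyl

open QuantizedWeyl in
theorem stmt_5_general (n : ℕ) (q : Fin n → ℂ)
    (hq : ∀ i, q i ≠ 0 ∧ q i ≠ 1)
    (σ : Fin n → (MvPolynomial (Fin n) ℂ →ₐ[ℂ] MvPolynomial (Fin n) ℂ))
    (hσ : ∀ i j : Fin n, σ i (X j) =
      if j < i then X j
      else if j = i then
        1 + C (q i) * X i + ∑ k ∈ Finset.Iio i, C (q k - 1) * X k
      else C (q i) * X j) :
    (∀ i, Function.Bijective (σ i)) ∧
      (∀ i j : Fin n, (σ i).comp (σ j) = (σ j).comp (σ i)) := by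
  have hσ_eq : σ = sigma q := funext fun i => algHom_ext fun j => by
    rw [hσ, sigma, aeval_X]
    rfl
  subst hσ_eq
  exact ⟨sigma_bijective fun i => (hq i).1, sigma_comm q⟩

/-- the `ℂ`-algebra endomorphisms `σ i` of `ℂ[t 1, …, t n]` determined by
`σ i (t j) = t j` for `j < i`, `σ i (t i) = 1 + q i t i + ∑_{k<i} (q k − 1) t k`,
`σ i (t j) = q i t j` for `j > i`, are bijective and pairwise commute. -/
theorem stmt_5 (n : ℕ) (hn : 1 ≤ n) (q : Fin n → ℂ)
    (hq : ∀ i, q i ≠ 0 ∧ q i ≠ 1)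
    (σ : Fin n → (MvPolynomial (Fin n) ℂ →ₐ[ℂ] MvPolynomial (Fin n) ℂ))
    (hσ : ∀ i j : Fin n, σ i (X j) =
      if j < i then X j
      else if j = i then
        1 + C (q i) * X i + ∑ k ∈ Finset.Iio i, C (q k - 1) * X k
      else C (q i) * X j) :
    (∀ i, Function.Bijective (σ i)) ∧
      (∀ i j : Fin n, (σ i).comp (σ j) = (σ j).comp (σ i)) :=
  stmt_5_general n q hq σ hσ
end

section
/- For every g = (g_1,…,g_n) ∈ ℤ^n and every α ∈ ℂ^n, the ideal σ_1^{g_1}σ_2^{g_2}⋯σ_n^{g_n}(m_α) (the image of m_α under Ideal.map of the automorphism σ_1^{g_1} ∘ ⋯ ∘ σ_n^{g_n}) equals the ideal of R generated by the n elements [g_j]_{q_j}·γ_{j−1} + (q_1^{g_1} q_2^{g_2} ⋯ q_j^{g_j})·t_j − α_j, for j = 1, …, n. -/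
open MvPolynomial

variable {n : ℕ}

abbrev Raut (n : ℕ) := MvPolynomial (Fin n) ℂ ≃ₐ[ℂ] MvPolynomial (Fin n) ℂ

def PtMap (e : Raut n) (F : (Fin n → ℂ) → (Fin n → ℂ)) : Prop :=
  ∀ (γ : Fin n → ℂ) (x : MvPolynomial (Fin n) ℂ), aeval γ (e x) = aeval (F γ) x

theorem ptMap_one : PtMap (1 : Raut n) id := fun γ x => rfl

theorem ptMap_mul {e₁ e₂ : Raut n} {F₁ F₂} (h₁ : PtMap e₁ F₁) (h₂ : PtMap e₂ F₂) :
    PtMap (e₁ * e₂) (F₂ ∘ F₁) := fun γ x => by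
  rw [AlgEquiv.mul_apply, h₁, h₂]; rfl

theorem ptMap_inv {e : Raut n} (F : Equiv.Perm (Fin n → ℂ)) (h : PtMap e ⇑F) :
    PtMap e⁻¹ ⇑F.symm := by
  intro γ x
  have h2 := h (F.symm γ) ((e⁻¹ : Raut n) x)
  have h3 : e ((e⁻¹ : Raut n) x) = x := e.apply_symm_apply x
  rw [h3, Equiv.apply_symm_apply] at h2
  exact h2.symm

theorem ptMap_pow {e : Raut n} (F : Equiv.Perm (Fin n → ℂ)) (h : PtMap e ⇑F) (k : ℕ) :
    PtMap (e ^ k) ⇑(F ^ k) := by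
  induction k with
  | zero => simpa using ptMap_one
  | succ k ih =>
    rw [pow_succ, pow_succ']
    have := ptMap_mul ih h
    simpa [Function.comp] using this

theorem ptMap_zpow {e : Raut n} (F : Equiv.Perm (Fin n → ℂ)) (h : PtMap e ⇑F) (g : ℤ) :
    PtMap (e ^ g) ⇑(F ^ g) := by
  cases g with
  | ofNat k => rw [Int.ofNat_eq_coe, zpow_natCast, zpow_natCast]; exact ptMap_pow F h k
  | negSucc k =>
    rw [zpow_negSucc, zpow_negSucc]
    exact ptMap_inv _ (ptMap_pow F h (k+1))


/-- The explicit point map for `σ i ^ g`. -/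
noncomputable def Efun (q : Fin n → ℂ) (i : Fin n) (g : ℤ) (γ : Fin n → ℂ) : Fin n → ℂ :=
  fun j =>
    if j < i then γ j
    else if j = i then
      q i ^ g * γ i + (q i ^ g - 1) / (q i - 1) * (1 + ∑ k ∈ Finset.Iio i, (q k - 1) * γ k)
    else q i ^ g * γ j

theorem Efun_lt {q : Fin n → ℂ} {i j : Fin n} (h : j < i) (g : ℤ) (γ : Fin n → ℂ) :
    Efun q i g γ j = γ j := if_pos h

theorem Efun_self (q : Fin n → ℂ) (i : Fin n) (g : ℤ) (γ : Fin n → ℂ) :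
    Efun q i g γ i =
      q i ^ g * γ i + (q i ^ g - 1) / (q i - 1) * (1 + ∑ k ∈ Finset.Iio i, (q k - 1) * γ k) := by
  unfold Efun; rw [if_neg (lt_irrefl i), if_pos rfl]

theorem Efun_gt {q : Fin n → ℂ} {i j : Fin n} (h1 : ¬j < i) (h2 : j ≠ i) (g : ℤ) (γ : Fin n → ℂ) :
    Efun q i g γ j = q i ^ g * γ j := by
  unfold Efun; rw [if_neg h1, if_neg h2]

theorem Efun_sum {q : Fin n → ℂ} {i : Fin n} (g : ℤ) (γ : Fin n → ℂ) :
    ∑ k ∈ Finset.Iio i, (q k - 1) * Efun q i g γ k = ∑ k ∈ Finset.Iio i, (q k - 1) * γ k :=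
  Finset.sum_congr rfl fun k hk => by rw [Efun_lt (Finset.mem_Iio.mp hk)]

theorem Efun_zero (q : Fin n → ℂ) (i : Fin n) (γ : Fin n → ℂ) : Efun q i 0 γ = γ := by
  funext j
  rcases lt_trichotomy j i with h | h | h
  · exact Efun_lt h 0 γ
  · subst h; rw [Efun_self]; simp
  · rw [Efun_gt (asymm h) (ne_of_gt h)]; simp

theorem Efun_add (q : Fin n → ℂ) (i : Fin n) (hq0 : q i ≠ 0) (hq1 : q i ≠ 1) (a b : ℤ)
    (γ : Fin n → ℂ) : Efun q i (a + b) γ = Efun q i a (Efun q i b γ) := by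
  have hsub : q i - 1 ≠ 0 := sub_ne_zero.mpr hq1
  funext j
  rcases lt_trichotomy j i with h | h | h
  · rw [Efun_lt h, Efun_lt h, Efun_lt h]
  · subst h
    rw [Efun_self, Efun_self, Efun_self, Efun_sum, zpow_add₀ hq0]
    field_simp
    ring
  · rw [Efun_gt (asymm h) (ne_of_gt h), Efun_gt (asymm h) (ne_of_gt h),
      Efun_gt (asymm h) (ne_of_gt h), zpow_add₀ hq0]
    ring

/-- `Efun` as a permutation. -/
noncomputable def Eperm (q : Fin n → ℂ) (i : Fin n) (hq0 : q i ≠ 0) (hq1 : q i ≠ 1) (g : ℤ) :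
    Equiv.Perm (Fin n → ℂ) where
  toFun := Efun q i g
  invFun := Efun q i (-g)
  left_inv γ := by rw [← Efun_add q i hq0 hq1, neg_add_cancel, Efun_zero]
  right_inv γ := by rw [← Efun_add q i hq0 hq1, add_neg_cancel, Efun_zero]

theorem Eperm_zpow (q : Fin n → ℂ) (i : Fin n) (hq0 : q i ≠ 0) (hq1 : q i ≠ 1) (g : ℤ) :
    (Eperm q i hq0 hq1 1) ^ g = Eperm q i hq0 hq1 g := by
  have key : ∀ a b : ℤ, Eperm q i hq0 hq1 a * Eperm q i hq0 hq1 b = Eperm q i hq0 hq1 (a + b) := by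
    intro a b
    ext γ
    exact (congrFun (Efun_add q i hq0 hq1 a b γ) _).symm
  have hinv : (Eperm q i hq0 hq1 1)⁻¹ = Eperm q i hq0 hq1 (-1) := by
    apply inv_eq_of_mul_eq_one_right
    rw [key]
    ext γ
    simp [Eperm, Efun_zero]
  induction g using Int.induction_on with
  | zero => ext γ; simp [Eperm, Efun_zero]
  | succ k ih => rw [zpow_add_one, ih, key]
  | pred k ih => rw [sub_eq_add_neg, zpow_add, ih, zpow_neg_one, hinv, key]

theorem ptMap_sigma (q : Fin n → ℂ) (i : Fin n) (hq1 : q i ≠ 1)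
    (σi : Raut n)
    (hσ : ∀ j : Fin n, σi (X j) =
      if j < i then X j
      else if j = i then
        1 + C (q i) * X i + ∑ k ∈ Finset.Iio i, C (q k - 1) * X k
      else C (q i) * X j) : PtMap σi (Efun q i 1) := by
  have hsub : q i - 1 ≠ 0 := sub_ne_zero.mpr hq1
  intro γ x
  have H : ((aeval (Efun q i 1 γ) : MvPolynomial (Fin n) ℂ →ₐ[ℂ] ℂ)) =
      (aeval γ : MvPolynomial (Fin n) ℂ →ₐ[ℂ] ℂ).comp σi.toAlgHom := by
    apply MvPolynomial.algHom_ext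
    intro j
    simp only [aeval_X, AlgHom.comp_apply, AlgEquiv.toAlgHom_eq_coe, AlgHom.coe_coe, AlgEquiv.coe_toAlgHom, hσ j]
    unfold Efun
    rcases lt_trichotomy j i with h | h | h
    · rw [if_pos h, if_pos h, aeval_X]
    · subst h
      rw [if_neg (lt_irrefl j), if_pos rfl, if_neg (lt_irrefl j), if_pos rfl]
      simp only [map_add, map_one, map_mul, aeval_C, aeval_X, map_sum, map_sub,
        Algebra.algebraMap_self, RingHom.id_apply, sub_mul, one_mul]
      rw [zpow_one, div_self hsub]
      ring
    · rw [if_neg (asymm h), if_neg (ne_of_gt h), if_neg (asymm h), if_neg (ne_of_gt h)]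
      simp [zpow_one]
  rw [H]
  rfl

theorem fold_eq (q : Fin n → ℂ) (hq : ∀ i, q i ≠ 0 ∧ q i ≠ 1) (g : Fin n → ℤ) (α : Fin n → ℂ) :
    (List.ofFn fun i : Fin n => Efun q i (g i)).foldl (fun p h => h p)
      (fun j => (α j - (q j ^ g j - 1) / (q j - 1) * (1 + ∑ k ∈ Finset.Iio j, (q k - 1) * α k))
        / (∏ i ∈ Finset.Iic j, q i ^ g i)) = α := by
  set β := fun j : Fin n =>
    (α j - (q j ^ g j - 1) / (q j - 1) * (1 + ∑ k ∈ Finset.Iio j, (q k - 1) * α k))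
      / (∏ i ∈ Finset.Iic j, q i ^ g i) with hβ
  set F := fun i : Fin n => Efun q i (g i) with hF
  set pt := fun m : ℕ => ((List.ofFn F).take m).foldl (fun p h => h p) β with hpt
  have hlen : (List.ofFn F).length = n := List.length_ofFn
  have hstep : ∀ (m : ℕ) (hm : m < n), pt (m + 1) = F ⟨m, hm⟩ (pt m) := by
    intro m hm
    show ((List.ofFn F).take (m + 1)).foldl (fun p h => h p) β = _
    have hm' : m < (List.ofFn F).length := by rw [hlen]; exact hm
    rw [List.take_succ, List.getElem?_eq_getElem hm', List.getElem_ofFn,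
      List.foldl_append]
    rfl
  have hinv : ∀ m, m ≤ n → ∀ j : Fin n, pt m j =
      if (j : ℕ) < m then α j
      else (∏ i ∈ Finset.univ.filter (fun i : Fin n => (i : ℕ) < m), q i ^ g i) * β j := by
    intro m
    induction m with
    | zero =>
      intro _ j
      have : pt 0 = β := rfl
      simp [this]
    | succ m ih =>
      intro hm1 j
      have hm : m < n := lt_of_lt_of_le (Nat.lt_succ_self m) hm1
      have ihm := ih (le_of_lt hm)
      rw [hstep m hm]
      set i₀ : Fin n := ⟨m, hm⟩ with hi₀
      have hIio : Finset.Iio i₀ = Finset.univ.filter (fun i : Fin n => (i : ℕ) < m) := by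
        ext k; simp [Finset.mem_Iio, Fin.lt_def, -Fin.val_fin_lt, hi₀]
      have hnotmem : i₀ ∉ Finset.univ.filter (fun i : Fin n => (i : ℕ) < m) := by simp [hi₀]
      have hcstep : Finset.univ.filter (fun i : Fin n => (i : ℕ) < m + 1)
          = insert i₀ (Finset.univ.filter (fun i : Fin n => (i : ℕ) < m)) := by
        ext k
        simp only [Finset.mem_filter, Finset.mem_univ, true_and, Finset.mem_insert, Fin.ext_iff, hi₀]
        omega
      have hprodsucc : (∏ i ∈ Finset.univ.filter (fun i : Fin n => (i : ℕ) < m + 1), q i ^ g i)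
          = q i₀ ^ g i₀ * ∏ i ∈ Finset.univ.filter (fun i : Fin n => (i : ℕ) < m), q i ^ g i := by
        rw [hcstep, Finset.prod_insert hnotmem]
      rcases lt_trichotomy j i₀ with h | h | h
      · have hj : (j : ℕ) < m := h
        rw [show F i₀ = Efun q i₀ (g i₀) from rfl, Efun_lt h, ihm j, if_pos hj,
          if_pos (Nat.lt_succ_of_lt hj)]
      · subst h
        have hne : (∏ i ∈ Finset.Iic i₀, q i ^ g i) ≠ 0 :=
          Finset.prod_ne_zero_iff.mpr fun i _ => zpow_ne_zero _ (hq i).1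
        rw [show F i₀ = Efun q i₀ (g i₀) from rfl, Efun_self]
        have hsum : ∑ k ∈ Finset.Iio i₀, (q k - 1) * pt m k
            = ∑ k ∈ Finset.Iio i₀, (q k - 1) * α k := by
          refine Finset.sum_congr rfl fun k hk => ?_
          have hk' : k < i₀ := Finset.mem_Iio.mp hk
          rw [ihm k, if_pos (show (k : ℕ) < m from hk')]
        have hptj : pt m i₀ = (∏ i ∈ Finset.univ.filter (fun i : Fin n => (i : ℕ) < m),
            q i ^ g i) * β i₀ := by
          rw [ihm i₀, if_neg (lt_irrefl m)]
        have hIic : (∏ i ∈ Finset.Iic i₀, q i ^ g i)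
            = q i₀ ^ g i₀ * ∏ i ∈ Finset.univ.filter (fun i : Fin n => (i : ℕ) < m), q i ^ g i := by
          rw [← Finset.Iio_insert, Finset.prod_insert (by simp), hIio]
        rw [hsum, hptj, if_pos (Nat.lt_succ_self m)]
        rw [hβ]
        simp only
        rw [← mul_assoc, ← hIic, mul_comm, div_mul_cancel₀ _ hne, sub_add_cancel]
      · have hmj : m < (j : ℕ) := h
        have hj1 : ¬ (j : ℕ) < m := by omega
        have hj2 : ¬ (j : ℕ) < m + 1 := by omega
        rw [show F i₀ = Efun q i₀ (g i₀) from rfl, Efun_gt (asymm h) h.ne', ihm j,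
          if_neg hj1, if_neg hj2, hprodsucc, mul_assoc]
  have htake : (List.ofFn F).take n = List.ofFn F :=
    List.take_of_length_le (le_of_eq hlen)
  funext j
  have hj := hinv n le_rfl j
  rw [if_pos j.isLt] at hj
  rw [← htake]
  exact hj

theorem sub_C_aeval_mem (β : Fin n → ℂ) (f : MvPolynomial (Fin n) ℂ) :
    f - C (aeval β f) ∈ Ideal.span (Set.range fun j : Fin n => (X j : MvPolynomial (Fin n) ℂ) - C (β j)) := by
  set I := Ideal.span (Set.range fun j : Fin n => (X j : MvPolynomial (Fin n) ℂ) - C (β j)) with hI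
  induction f using MvPolynomial.induction_on with
  | C a => simp
  | add p r hp hr =>
    have : p + r - C (aeval β (p + r)) = (p - C (aeval β p)) + (r - C (aeval β r)) := by
      rw [map_add, map_add]; ring
    rw [this]; exact I.add_mem hp hr
  | mul_X p j hp =>
    have : p * X j - C (aeval β (p * X j))
        = p * (X j - C (β j)) + C (β j) * (p - C (aeval β p)) := by
      rw [map_mul, aeval_X, map_mul]; ring
    rw [this]
    exact I.add_mem (I.mul_mem_left p (Ideal.subset_span ⟨j, rfl⟩)) (I.mul_mem_left _ hp)

theorem span_eq_ker (β : Fin n → ℂ) :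
    Ideal.span (Set.range fun j : Fin n => (X j : MvPolynomial (Fin n) ℂ) - C (β j))
      = RingHom.ker (aeval β : MvPolynomial (Fin n) ℂ →ₐ[ℂ] ℂ) := by
  apply le_antisymm
  · rw [Ideal.span_le]
    rintro _ ⟨j, rfl⟩
    simp [RingHom.mem_ker]
  · intro f hf
    rw [RingHom.mem_ker] at hf
    have := sub_C_aeval_mem β f
    rwa [hf, map_zero, sub_zero] at this

theorem span_C_mul (c : Fin n → ℂ) (hc : ∀ j, c j ≠ 0) (u : Fin n → MvPolynomial (Fin n) ℂ) :
    Ideal.span (Set.range fun j => C (c j) * u j) = Ideal.span (Set.range u) := by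
  apply le_antisymm
  · rw [Ideal.span_le]
    rintro _ ⟨j, rfl⟩
    exact Ideal.mul_mem_left _ _ (Ideal.subset_span ⟨j, rfl⟩)
  · rw [Ideal.span_le]
    rintro _ ⟨j, rfl⟩
    have : u j = C (c j)⁻¹ * (C (c j) * u j) := by
      rw [← mul_assoc, ← map_mul, inv_mul_cancel₀ (hc j), map_one, one_mul]
    rw [this]
    exact Ideal.mul_mem_left _ _ (Ideal.subset_span ⟨j, rfl⟩)

theorem ptMap_ofFn (k : ℕ) (f : Fin k → Raut n) (F : Fin k → ((Fin n → ℂ) → (Fin n → ℂ)))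
    (h : ∀ i, PtMap (f i) (F i)) :
    PtMap (List.ofFn f).prod (fun γ => (List.ofFn F).foldl (fun p h => h p) γ) := by
  induction k with
  | zero => intro γ x; simp
  | succ k ih =>
    rw [List.ofFn_succ, List.ofFn_succ, List.prod_cons]
    intro γ x
    have h1 := h 0
    have h2 := ih (fun i => f i.succ) (fun i => F i.succ) (fun i => h i.succ)
    rw [AlgEquiv.mul_apply, h1, h2]
    simp

/-- explicit generators for the image ideal
`σ_1^{g_1} ⋯ σ_n^{g_n} (m_α)` in `ℂ[t_1, …, t_n]`:
it is generated by the elements `[g j]_{q j}·γ_{j−1} + (q_1^{g_1}⋯q_j^{g_j})·t j − α j`. -/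
theorem stmt_6 (n : ℕ) (hn : 1 ≤ n) (q : Fin n → ℂ)
    (hq : ∀ i, q i ≠ 0 ∧ q i ≠ 1)
    (σ : Fin n → (MvPolynomial (Fin n) ℂ ≃ₐ[ℂ] MvPolynomial (Fin n) ℂ))
    (hσ : ∀ i j : Fin n, σ i (X j) =
      if j < i then X j
      else if j = i then
        1 + C (q i) * X i + ∑ k ∈ Finset.Iio i, C (q k - 1) * X k
      else C (q i) * X j)
    (g : Fin n → ℤ) (α : Fin n → ℂ) :
    Ideal.map ((List.ofFn fun i => σ i ^ g i).prod :
        MvPolynomial (Fin n) ℂ ≃ₐ[ℂ] MvPolynomial (Fin n) ℂ)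
      (Ideal.span (Set.range fun j : Fin n => X j - C (α j)))
    = Ideal.span (Set.range fun j : Fin n =>
        C ((q j ^ (g j) - 1) / (q j - 1) *
            (1 + ∑ k ∈ Finset.Iio j, (q k - 1) * α k))
          + C (∏ i ∈ Finset.Iic j, q i ^ (g i)) * X j - C (α j)) := by
  have hq0 : ∀ i, q i ≠ 0 := fun i => (hq i).1
  have hq1 : ∀ i, q i ≠ 1 := fun i => (hq i).2
  have hBne : ∀ j : Fin n, (∏ i ∈ Finset.Iic j, q i ^ g i) ≠ 0 := fun j =>
    Finset.prod_ne_zero_iff.mpr fun i _ => zpow_ne_zero _ (hq0 i)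
  set e : Raut n := (List.ofFn fun i => σ i ^ g i).prod with he
  set β := fun j : Fin n =>
    (α j - (q j ^ g j - 1) / (q j - 1) * (1 + ∑ k ∈ Finset.Iio j, (q k - 1) * α k))
      / (∏ i ∈ Finset.Iic j, q i ^ g i) with hβ
  -- rewrite the RHS generators
  have hgen : (fun j : Fin n =>
      C ((q j ^ g j - 1) / (q j - 1) * (1 + ∑ k ∈ Finset.Iio j, (q k - 1) * α k))
        + C (∏ i ∈ Finset.Iic j, q i ^ g i) * X j - C (α j))
      = fun j : Fin n =>
        C (∏ i ∈ Finset.Iic j, q i ^ g i) * ((X j : MvPolynomial (Fin n) ℂ) - C (β j)) := by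
    funext j
    have h1 : (∏ i ∈ Finset.Iic j, q i ^ g i) * β j
        = α j - (q j ^ g j - 1) / (q j - 1) * (1 + ∑ k ∈ Finset.Iio j, (q k - 1) * α k) := by
      simp only [hβ]
      rw [mul_comm, div_mul_cancel₀ _ (hBne j)]
    rw [mul_sub, ← map_mul, h1, map_sub]
    ring
  rw [hgen, span_C_mul _ hBne, span_eq_ker β, span_eq_ker α]
  -- the key evaluation identity
  have hpt : ∀ i : Fin n, PtMap (σ i ^ g i) (Efun q i (g i)) := by
    intro i
    have h1 : PtMap (σ i) ⇑(Eperm q i (hq0 i) (hq1 i) 1) :=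
      ptMap_sigma q i (hq1 i) (σ i) (hσ i)
    have h2 := ptMap_zpow _ h1 (g i)
    rwa [Eperm_zpow] at h2
  have hprod := ptMap_ofFn n (fun i => σ i ^ g i) (fun i => Efun q i (g i)) hpt
  have hfold := fold_eq q hq g α
  have key : ∀ x, aeval β (e x) = aeval α x := by
    intro x
    rw [he, hprod β x, hβ]
    exact congrArg (fun p => (aeval p : MvPolynomial (Fin n) ℂ →ₐ[ℂ] ℂ) x) hfold
  -- ideal manipulation
  apply le_antisymm
  · rw [Ideal.map_le_iff_le_comap]
    intro x hx
    rw [RingHom.mem_ker] at hx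
    rw [Ideal.mem_comap, RingHom.mem_ker, key x, hx]
  · intro y hy
    rw [RingHom.mem_ker] at hy
    have h1 : e.symm y ∈ RingHom.ker (aeval α : MvPolynomial (Fin n) ℂ →ₐ[ℂ] ℂ) := by
      rw [RingHom.mem_ker, ← key (e.symm y), AlgEquiv.apply_symm_apply]
      exact hy
    have h2 := Ideal.mem_map_of_mem e h1
    rwa [AlgEquiv.apply_symm_apply] at h2
end

section
/- For every g = (g_1,…,g_n) ∈ ℤ^n, every α ∈ ℂ^n and every j ∈ {1,…,n}: t_j belongs to the ideal σ_1^{g_1}⋯σ_n^{g_n}(m_α) if and only if γ_j = q_j^{g_j}·γ_{j−1}. Consequently, there exists g ∈ ℤ^n with t_j ∈ σ_1^{g_1}⋯σ_n^{g_n}(m_α) if and only if γ_j = q_j^k·γ_{j−1} for some integer k. -/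
open MvPolynomial

private lemma appC {n : ℕ} (f : MvPolynomial (Fin n) ℂ ≃ₐ[ℂ] MvPolynomial (Fin n) ℂ)
    (c : ℂ) : f (C c) = C c := by
  rw [← MvPolynomial.algebraMap_eq]
  exact f.commutes c

private lemma mem_span_iff {n : ℕ} (α : Fin n → ℂ) (f : MvPolynomial (Fin n) ℂ) :
    f ∈ Ideal.span (Set.range fun j : Fin n => X j - C (α j)) ↔ eval α f = 0 := by
  constructor
  · intro hf
    have hle : Ideal.span (Set.range fun j : Fin n => X j - C (α j))
        ≤ RingHom.ker (eval α) := by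
      rw [Ideal.span_le]
      rintro _ ⟨j, rfl⟩
      simp [RingHom.mem_ker]
    exact hle hf
  · intro hf
    have key : ∀ p : MvPolynomial (Fin n) ℂ,
        p - C (eval α p) ∈ Ideal.span (Set.range fun j : Fin n => X j - C (α j)) := by
      intro p
      induction p using MvPolynomial.induction_on with
      | C a => simpa using Ideal.zero_mem _
      | add p r hp hr =>
        have := Ideal.add_mem _ hp hr
        rw [← add_sub_add_comm] at this
        simpa [map_add] using this
      | mul_X p i hp =>
        have h1 : p * X i - C (eval α (p * X i)) =
            p * (X i - C (α i)) + C (α i) * (p - C (eval α p)) := by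
          rw [map_mul, eval_X, C_mul]
          ring
        rw [h1]
        exact Ideal.add_mem _
          (Ideal.mul_mem_left _ _ (Ideal.subset_span ⟨i, rfl⟩))
          (Ideal.mul_mem_left _ _ hp)
    have := key f
    rwa [hf, map_zero, sub_zero] at this

private lemma symm_eig {n : ℕ} (e : MvPolynomial (Fin n) ℂ ≃ₐ[ℂ] MvPolynomial (Fin n) ℂ)
    (c : ℂ) (hc : c ≠ 0) (P : MvPolynomial (Fin n) ℂ) (h : e P = C c * P) :
    e.symm P = C c⁻¹ * P := by
  have h2 : C c * e.symm P = P := by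
    have := congrArg e.symm h
    rw [e.symm_apply_apply, map_mul, appC] at this
    exact this.symm
  have h3 := congrArg (fun x => C c⁻¹ * x) h2
  rwa [← mul_assoc, ← map_mul, inv_mul_cancel₀ hc, map_one, one_mul] at h3

private lemma pow_eig {n : ℕ} (e : MvPolynomial (Fin n) ℂ ≃ₐ[ℂ] MvPolynomial (Fin n) ℂ)
    (c : ℂ) (P : MvPolynomial (Fin n) ℂ) (h : e P = C c * P) (N : ℕ) :
    (e ^ N) P = C (c ^ N) * P := by
  induction N with
  | zero => simp
  | succ N ih =>
    rw [pow_succ, AlgEquiv.mul_apply, h, map_mul, appC, ih, ← mul_assoc, ← map_mul,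
      pow_succ]
    ring_nf

private lemma zpow_eig {n : ℕ} (e : MvPolynomial (Fin n) ℂ ≃ₐ[ℂ] MvPolynomial (Fin n) ℂ)
    (c : ℂ) (hc : c ≠ 0) (P : MvPolynomial (Fin n) ℂ) (h : e P = C c * P) (m : ℤ) :
    (e ^ m) P = C (c ^ m) * P := by
  rcases m with N | N
  · simpa [zpow_natCast] using pow_eig e c P h N
  · rw [zpow_negSucc, zpow_negSucc, ← inv_pow, ← inv_pow]
    have he : e⁻¹ = e.symm := rfl
    rw [he]
    exact pow_eig e.symm c⁻¹ P (symm_eig e c hc P h) (N + 1)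

private lemma list_eig {n : ℕ} (P : MvPolynomial (Fin n) ℂ)
    (E : Fin n → (MvPolynomial (Fin n) ℂ ≃ₐ[ℂ] MvPolynomial (Fin n) ℂ)) (c : Fin n → ℂ)
    (h : ∀ i, E i P = C (c i) * P) (l : List (Fin n)) :
    (l.map E).prod P = C ((l.map c).prod) * P := by
  induction l with
  | nil => simp
  | cons a l ih =>
    rw [List.map_cons, List.map_cons, List.prod_cons, List.prod_cons,
      AlgEquiv.mul_apply, ih, map_mul, appC, h a, map_mul]
    ring

private lemma sigma_fix {n : ℕ} (q : Fin n → ℂ)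
    (σ : Fin n → (MvPolynomial (Fin n) ℂ ≃ₐ[ℂ] MvPolynomial (Fin n) ℂ))
    (hσ : ∀ i j : Fin n, σ i (X j) =
      if j < i then X j
      else if j = i then
        1 + C (q i) * X i + ∑ k ∈ Finset.Iio i, C (q k - 1) * X k
      else C (q i) * X j)
    (S : Finset (Fin n)) (i : Fin n) (hi : ∀ k ∈ S, k < i) :
    σ i (1 + ∑ k ∈ S, C (q k - 1) * X k) = 1 + ∑ k ∈ S, C (q k - 1) * X k := by
  rw [map_add, map_one, map_sum]
  congr 1
  refine Finset.sum_congr rfl fun k hk => ?_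
  rw [map_mul, appC, hσ, if_pos (hi k hk)]

private lemma sigma_eig {n : ℕ} (q : Fin n → ℂ)
    (σ : Fin n → (MvPolynomial (Fin n) ℂ ≃ₐ[ℂ] MvPolynomial (Fin n) ℂ))
    (hσ : ∀ i j : Fin n, σ i (X j) =
      if j < i then X j
      else if j = i then
        1 + C (q i) * X i + ∑ k ∈ Finset.Iio i, C (q k - 1) * X k
      else C (q i) * X j)
    (S : Finset (Fin n)) (i : Fin n) (h1 : Finset.Iio i ⊆ S) (h2 : i ∈ S) :
    σ i (1 + ∑ k ∈ S, C (q k - 1) * X k)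
      = C (q i) * (1 + ∑ k ∈ S, C (q k - 1) * X k) := by
  have hIic : Finset.Iic i ⊆ S := by
    intro k hk
    rcases lt_or_eq_of_le (Finset.mem_Iic.mp hk) with h | h
    · exact h1 (Finset.mem_Iio.mpr h)
    · exact h ▸ h2
  have hsum : ∀ f : Fin n → MvPolynomial (Fin n) ℂ,
      ∑ k ∈ S, f k = (∑ k ∈ S \ Finset.Iic i, f k) + (f i + ∑ k ∈ Finset.Iio i, f k) := by
    intro f
    rw [← Finset.sum_sdiff hIic]
    congr 1
    rw [← Finset.Iio_insert, Finset.sum_insert (by simp)]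
  have eIio : (σ i) (∑ k ∈ Finset.Iio i, C (q k - 1) * X k)
      = ∑ k ∈ Finset.Iio i, C (q k - 1) * X k := by
    rw [map_sum]
    refine Finset.sum_congr rfl fun k hk => ?_
    rw [map_mul, appC, hσ, if_pos (Finset.mem_Iio.mp hk)]
  have eD : (σ i) (∑ k ∈ S \ Finset.Iic i, C (q k - 1) * X k)
      = C (q i) * ∑ k ∈ S \ Finset.Iic i, C (q k - 1) * X k := by
    rw [map_sum, Finset.mul_sum]
    refine Finset.sum_congr rfl fun k hk => ?_
    have hik : i < k := by
      have := (Finset.mem_sdiff.mp hk).2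
      simpa [Finset.mem_Iic] using not_le.mp (fun h => this (Finset.mem_Iic.mpr h))
    rw [map_mul, appC, hσ, if_neg (not_lt.mpr hik.le), if_neg hik.ne']
    ring
  have eX : σ i (X i)
      = 1 + C (q i) * X i + ∑ k ∈ Finset.Iio i, C (q k - 1) * X k := by
    rw [hσ]
    simp
  rw [hsum (fun k => C (q k - 1) * X k), map_add, map_one, map_add, eD, map_add,
    map_mul, appC, eX, eIio]
  have hCq : (C (q i - 1) : MvPolynomial (Fin n) ℂ) = C (q i) - 1 := by
    rw [map_sub, map_one]
  rw [hCq]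
  ring

/-- `t j ∈ σ_1^{g_1}⋯σ_n^{g_n}(m_α)` iff `γ_j = q_j^{g_j}·γ_{j−1}`;
consequently the orbit of `m_α` contains a `j`-break iff `γ_j = q_j^k·γ_{j−1}`
for some integer `k`. -/
theorem stmt_7 (n : ℕ) (hn : 1 ≤ n) (q : Fin n → ℂ)
    (hq : ∀ i, q i ≠ 0 ∧ q i ≠ 1)
    (σ : Fin n → (MvPolynomial (Fin n) ℂ ≃ₐ[ℂ] MvPolynomial (Fin n) ℂ))
    (hσ : ∀ i j : Fin n, σ i (X j) =
      if j < i then X j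
      else if j = i then
        1 + C (q i) * X i + ∑ k ∈ Finset.Iio i, C (q k - 1) * X k
      else C (q i) * X j)
    (α : Fin n → ℂ) :
    (∀ (g : Fin n → ℤ) (j : Fin n),
      X j ∈ Ideal.map ((List.ofFn fun i => σ i ^ g i).prod :
            MvPolynomial (Fin n) ℂ ≃ₐ[ℂ] MvPolynomial (Fin n) ℂ)
          (Ideal.span (Set.range fun j : Fin n => X j - C (α j)))
        ↔ (1 + ∑ k ∈ Finset.Iic j, (q k - 1) * α k)
            = q j ^ (g j) * (1 + ∑ k ∈ Finset.Iio j, (q k - 1) * α k)) ∧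
    (∀ j : Fin n,
      (∃ g : Fin n → ℤ,
        X j ∈ Ideal.map ((List.ofFn fun i => σ i ^ g i).prod :
              MvPolynomial (Fin n) ℂ ≃ₐ[ℂ] MvPolynomial (Fin n) ℂ)
            (Ideal.span (Set.range fun j : Fin n => X j - C (α j))))
        ↔ ∃ k : ℤ, (1 + ∑ i ∈ Finset.Iic j, (q i - 1) * α i)
            = q j ^ k * (1 + ∑ i ∈ Finset.Iio j, (q i - 1) * α i)) := by
  classical
  have main : ∀ (g : Fin n → ℤ) (j : Fin n),
      X j ∈ Ideal.map ((List.ofFn fun i => σ i ^ g i).prod :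
            MvPolynomial (Fin n) ℂ ≃ₐ[ℂ] MvPolynomial (Fin n) ℂ)
          (Ideal.span (Set.range fun j : Fin n => X j - C (α j)))
        ↔ (1 + ∑ k ∈ Finset.Iic j, (q k - 1) * α k)
            = q j ^ (g j) * (1 + ∑ k ∈ Finset.Iio j, (q k - 1) * α k) := by
    intro g j
    set L : MvPolynomial (Fin n) ℂ ≃ₐ[ℂ] MvPolynomial (Fin n) ℂ :=
      (List.ofFn fun i => σ i ^ g i).prod with hLdef
    set ΓIic : MvPolynomial (Fin n) ℂ :=
      1 + ∑ k ∈ Finset.Iic j, C (q k - 1) * X k with hΓIic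
    set ΓIio : MvPolynomial (Fin n) ℂ :=
      1 + ∑ k ∈ Finset.Iio j, C (q k - 1) * X k with hΓIio
    -- eigenvalue facts
    have eigIic : ∀ i : Fin n, (σ i ^ g i) ΓIic
        = C ((if i ≤ j then q i else 1) ^ g i) * ΓIic := by
      intro i
      by_cases hij : i ≤ j
      · rw [if_pos hij]
        refine zpow_eig (σ i) (q i) (hq i).1 _ ?_ (g i)
        exact sigma_eig q σ hσ _ i
          (fun k hk => Finset.mem_Iic.mpr ((Finset.mem_Iio.mp hk).le.trans hij))
          (Finset.mem_Iic.mpr hij)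
      · rw [if_neg hij]
        refine zpow_eig (σ i) 1 one_ne_zero _ ?_ (g i)
        rw [map_one, one_mul]
        exact sigma_fix q σ hσ _ i
          (fun k hk => lt_of_le_of_lt (Finset.mem_Iic.mp hk) (not_le.mp hij))
    have eigIio : ∀ i : Fin n, (σ i ^ g i) ΓIio
        = C ((if i < j then q i else 1) ^ g i) * ΓIio := by
      intro i
      by_cases hij : i < j
      · rw [if_pos hij]
        refine zpow_eig (σ i) (q i) (hq i).1 _ ?_ (g i)
        exact sigma_eig q σ hσ _ i
          (fun k hk => Finset.mem_Iio.mpr ((Finset.mem_Iio.mp hk).trans hij))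
          (Finset.mem_Iio.mpr hij)
      · rw [if_neg hij]
        refine zpow_eig (σ i) 1 one_ne_zero _ ?_ (g i)
        rw [map_one, one_mul]
        exact sigma_fix q σ hσ _ i
          (fun k hk => lt_of_lt_of_le (Finset.mem_Iio.mp hk) (not_lt.mp hij))
    have hprodIic : ((List.finRange n).map
          (fun i => (if i ≤ j then q i else 1) ^ g i)).prod
        = ∏ i ∈ Finset.Iic j, q i ^ g i := by
      rw [← List.ofFn_eq_map, List.prod_ofFn]
      have h1 : ∀ i : Fin n, (if i ≤ j then q i else 1) ^ g i
          = if i ≤ j then q i ^ g i else 1 := by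
        intro i; split_ifs <;> simp
      simp only [h1]
      rw [← Finset.prod_filter]
      congr 1
      ext k
      simp
    have hprodIio : ((List.finRange n).map
          (fun i => (if i < j then q i else 1) ^ g i)).prod
        = ∏ i ∈ Finset.Iio j, q i ^ g i := by
      rw [← List.ofFn_eq_map, List.prod_ofFn]
      have h1 : ∀ i : Fin n, (if i < j then q i else 1) ^ g i
          = if i < j then q i ^ g i else 1 := by
        intro i; split_ifs <;> simp
      simp only [h1]
      rw [← Finset.prod_filter]
      congr 1
      ext k
      simp
    have LIic : L ΓIic = C (∏ i ∈ Finset.Iic j, q i ^ g i) * ΓIic := by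
      have := list_eig ΓIic (fun i => σ i ^ g i)
        (fun i => (if i ≤ j then q i else 1) ^ g i) eigIic (List.finRange n)
      rw [← List.ofFn_eq_map, hprodIic] at this
      exact this
    have LIio : L ΓIio = C (∏ i ∈ Finset.Iio j, q i ^ g i) * ΓIio := by
      have := list_eig ΓIio (fun i => σ i ^ g i)
        (fun i => (if i < j then q i else 1) ^ g i) eigIio (List.finRange n)
      rw [← List.ofFn_eq_map, hprodIio] at this
      exact this
    have hcIic : (∏ i ∈ Finset.Iic j, q i ^ g i) ≠ 0 :=
      Finset.prod_ne_zero_iff.mpr fun i _ => zpow_ne_zero _ (hq i).1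
    have hcIio : (∏ i ∈ Finset.Iio j, q i ^ g i) ≠ 0 :=
      Finset.prod_ne_zero_iff.mpr fun i _ => zpow_ne_zero _ (hq i).1
    have LsIic := symm_eig L _ hcIic _ LIic
    have LsIio := symm_eig L _ hcIio _ LIio
    -- membership reduction
    have hmap : X j ∈ Ideal.map (L :
          MvPolynomial (Fin n) ℂ ≃ₐ[ℂ] MvPolynomial (Fin n) ℂ)
          (Ideal.span (Set.range fun j : Fin n => X j - C (α j)))
        ↔ L.symm (X j) ∈ Ideal.span (Set.range fun j : Fin n => X j - C (α j)) := by
      rw [Ideal.mem_map_of_equiv]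
      constructor
      · rintro ⟨x, hx, hLx⟩
        have : x = L.symm (X j) := by
          rw [← hLx, AlgEquiv.symm_apply_apply]
        exact this ▸ hx
      · intro hx
        exact ⟨L.symm (X j), hx, L.apply_symm_apply _⟩
    rw [hmap, mem_span_iff]
    -- key evaluation
    have hXsplit : C (q j - 1) * X j = ΓIic - ΓIio := by
      rw [hΓIic, hΓIio, ← Finset.Iio_insert, Finset.sum_insert (by simp)]
      ring
    have hev : (q j - 1) * eval α (L.symm (X j))
        = (∏ i ∈ Finset.Iic j, q i ^ g i)⁻¹
            * (1 + ∑ k ∈ Finset.Iic j, (q k - 1) * α k)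
          - (∏ i ∈ Finset.Iio j, q i ^ g i)⁻¹
            * (1 + ∑ k ∈ Finset.Iio j, (q k - 1) * α k) := by
      have e0 : L.symm (C (q j - 1) * X j)
          = C (∏ i ∈ Finset.Iic j, q i ^ g i)⁻¹ * ΓIic
            - C (∏ i ∈ Finset.Iio j, q i ^ g i)⁻¹ * ΓIio := by
        rw [hXsplit, map_sub, LsIic, LsIio]
      have e1 : L.symm (C (q j - 1) * X j) = C (q j - 1) * L.symm (X j) := by
        rw [map_mul, appC]
      have := congrArg (eval α) (e1.symm.trans e0)
      simpa [hΓIic, hΓIio, map_sub, map_add, map_mul, map_one] using this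
    have hqj1 : q j - 1 ≠ 0 := sub_ne_zero.mpr (hq j).2
    have hqjg : q j ^ g j ≠ 0 := zpow_ne_zero _ (hq j).1
    have hsplitc : (∏ i ∈ Finset.Iic j, q i ^ g i)
        = q j ^ g j * ∏ i ∈ Finset.Iio j, q i ^ g i := by
      rw [← Finset.Iio_insert, Finset.prod_insert (by simp)]
    constructor
    · intro h
      have h0 : (q j - 1) * eval α (L.symm (X j)) = 0 := by rw [h, mul_zero]
      rw [hev, hsplitc, sub_eq_zero, mul_inv] at h0
      have h1 : (1 + ∑ k ∈ Finset.Iic j, (q k - 1) * α k)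
          = q j ^ g j * (∏ i ∈ Finset.Iio j, q i ^ g i)
            * ((∏ i ∈ Finset.Iio j, q i ^ g i)⁻¹
              * (1 + ∑ k ∈ Finset.Iio j, (q k - 1) * α k)) := by
        rw [← h0]
        field_simp
      rw [h1]
      field_simp
    · intro h
      have h0 : (q j - 1) * eval α (L.symm (X j)) = 0 := by
        rw [hev, hsplitc, h]
        field_simp
        ring
      rcases mul_eq_zero.mp h0 with h1 | h1
      · exact absurd h1 hqj1
      · exact h1
  refine ⟨main, fun j => ⟨?_, ?_⟩⟩
  · rintro ⟨g, hg⟩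
    exact ⟨g j, (main g j).mp hg⟩
  · rintro ⟨k, hk⟩
    refine ⟨fun i => if i = j then k else 0, (main _ j).mpr ?_⟩
    simpa using hk
end

section
/- For every g = (g_1,…,g_n) ∈ ℤ^n and every α ∈ ℂ^n: σ_1^{g_1}σ_2^{g_2}⋯σ_n^{g_n}(m_α) = m_α if and only if for every j ∈ {1,…,n} one has (q_1^{g_1} q_2^{g_2} ⋯ q_j^{g_j} − 1)·γ_j = 0. In other words, the isotropy group ℤ^n_ω = {g ∈ ℤ^n : g(m_α) = m_α} equals {g ∈ ℤ^n : (q_1^{g_1}⋯q_j^{g_j} − 1)γ_j = 0 for all j = 1,…,n}. -/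
/-!
Write `Φ_g = σ_1^{g_1} ⋯ σ_n^{g_n}`. Since `m_α` is the kernel of evaluation at `α`, and an
ideal of this kind determines its `ℂ`-valued character, `Φ_g(m_α) = m_α` holds iff evaluation
at `α` is invariant under `Φ_g`. The polynomials `u_j = 1 + Σ_{k ≤ j} (q_k - 1) t_k` are common
eigenvectors: `σ_i u_j = q_i u_j` for `i ≤ j` and `σ_i u_j = u_j` for `i > j`. Because
`q_k ≠ 1`, they form a triangular system of generators, so invariance of evaluation at `α` can be
tested on them; there it reads `q_1^{g_1} ⋯ q_j^{g_j} γ_j = γ_j`, since `u_j(α) = γ_j`.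
-/

open MvPolynomial Finset

namespace MvPolynomial

variable {R σ : Type*} [CommRing R]

theorem sub_C_aeval_mem_span_X_sub_C (x : σ → R) (p : MvPolynomial σ R) :
    p - C (aeval x p) ∈ Ideal.span (Set.range fun i => X i - C (x i)) := by
  induction p using MvPolynomial.induction_on with
  | C a => simp
  | add p r hp hr => simpa [add_sub_add_comm] using add_mem hp hr
  | mul_X p i hp =>
    have key : p * X i - C (aeval x (p * X i))
        = p * (X i - C (x i)) + C (x i) * (p - C (aeval x p)) := by
      simp only [map_mul, aeval_X]
      ring
    rw [key]
    exact add_mem (Ideal.mul_mem_left _ _ (Ideal.subset_span ⟨i, rfl⟩))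
      (Ideal.mul_mem_left _ _ hp)

theorem span_X_sub_C_eq_ker_aeval (x : σ → R) :
    Ideal.span (Set.range fun i => X i - C (x i)) = RingHom.ker (aeval x) := by
  refine le_antisymm (Ideal.span_le.2 ?_) fun p hp => ?_
  · rintro _ ⟨i, rfl⟩
    simp
  · simpa [RingHom.mem_ker.1 hp] using sub_C_aeval_mem_span_X_sub_C x p

theorem algEquiv_apply_C (Φ : MvPolynomial σ R ≃ₐ[R] MvPolynomial σ R) (a : R) :
    Φ (C a) = C a :=
  Φ.commutes a

end MvPolynomial

namespace AlgHom

variable {R A : Type*} [CommRing R] [Ring A] [Algebra R A]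

theorem eq_of_ker_le {f g : A →ₐ[R] R} (h : RingHom.ker f ≤ RingHom.ker g) : f = g := by
  ext p
  have hp : p - algebraMap R A (f p) ∈ RingHom.ker g := h (by simp [RingHom.mem_ker])
  exact (sub_eq_zero.1 (by simpa [RingHom.mem_ker] using hp)).symm

theorem map_ker_eq_ker_iff (Φ : A ≃ₐ[R] A) (f : A →ₐ[R] R) :
    Ideal.map Φ (RingHom.ker f) = RingHom.ker f ↔ f.comp Φ = f := by
  have hmap : Ideal.map Φ (RingHom.ker f) = RingHom.ker (f.comp Φ.symm.toAlgHom) :=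
    (Ideal.map_comap_of_equiv (Φ : A ≃+* A)).trans (comap_ker f Φ.symm.toAlgHom)
  rw [hmap]
  refine ⟨fun h => ?_, fun h => ?_⟩
  · ext p
    simpa using DFunLike.congr_fun (eq_of_ker_le h.ge) (Φ p)
  · congr 1
    ext p
    simpa using (DFunLike.congr_fun h (Φ.symm p)).symm

end AlgHom

namespace AlgEquiv

variable {K A : Type*} [Field K] [Semiring A] [Algebra K A]

theorem zpow_apply_of_apply_eq_smul {Φ : A ≃ₐ[K] A} {c : K} (hc : c ≠ 0) {p : A}
    (h : Φ p = c • p) (m : ℤ) : (Φ ^ m) p = c ^ m • p := by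
  have hinv : Φ⁻¹ p = c⁻¹ • p := by
    apply Φ.injective
    rw [← mul_apply, mul_inv_cancel, one_apply, map_smul, h, smul_smul, inv_mul_cancel₀ hc,
      one_smul]
  induction m using Int.induction_on with
  | zero => simp
  | succ m ih =>
    rw [zpow_add_one, mul_apply, h, map_smul, ih, smul_smul, zpow_add_one₀ hc, mul_comm]
  | pred m ih =>
    rw [zpow_sub_one, mul_apply, hinv, map_smul, ih, smul_smul, zpow_sub_one₀ hc, mul_comm]

theorem list_prod_apply_of_apply_eq_smul {ι : Type*} (l : List ι) {Φ : ι → A ≃ₐ[K] A}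
    {c : ι → K} {p : A} (h : ∀ i, Φ i p = c i • p) :
    (l.map Φ).prod p = (l.map c).prod • p := by
  induction l with
  | nil => simp
  | cons i l ih => simp [mul_apply, ih, h, smul_smul, mul_comm]

end AlgEquiv

theorem eq_of_forall_sum_Iic_smul_eq {ι K M : Type*} [LinearOrder ι] [WellFoundedLT ι]
    [LocallyFiniteOrderBot ι] [Field K] [AddCommGroup M] [Module K M]
    {w : ι → K} (hw : ∀ k, w k ≠ 0) {f g : ι → M}
    (h : ∀ j, ∑ k ∈ Iic j, w k • f k = ∑ k ∈ Iic j, w k • g k) : f = g := by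
  funext j
  induction j using WellFoundedLT.induction with
  | _ j ih =>
    have hj := h j
    rw [← Iio_insert, sum_insert notMem_Iio_self, sum_insert notMem_Iio_self,
      sum_congr rfl fun k hk => by rw [ih k (mem_Iio.1 hk)]] at hj
    exact smul_right_injective M (hw j) (add_right_cancel hj)

section QWeyl

variable {K : Type*} [Field K] {n : ℕ}

/-- The polynomial `u_j` of the sketch above. -/
noncomputable def gammaPoly (q : Fin n → K) (j : Fin n) : MvPolynomial (Fin n) K :=
  1 + ∑ k ∈ Iic j, C (q k - 1) * X k

@[simp]
theorem aeval_gammaPoly (q α : Fin n → K) (j : Fin n) :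
    aeval α (gammaPoly q j) = 1 + ∑ k ∈ Iic j, (q k - 1) * α k := by
  simp [gammaPoly]

theorem gammaPoly_eq_add_sum_Ioc (q : Fin n → K) {i j : Fin n} (hij : i ≤ j) :
    gammaPoly q j = gammaPoly q i + ∑ k ∈ Ioc i j, C (q k - 1) * X k := by
  rw [gammaPoly, gammaPoly, ← Iic_union_Ioc_eq_Iic hij, sum_union (Iic_disjoint_Ioc le_rfl),
    add_assoc]

theorem algHom_eq_iff_forall_gammaPoly {B : Type*} [Ring B] [Algebra K B] {q : Fin n → K}
    (hq : ∀ k, q k ≠ 1) {φ ψ : MvPolynomial (Fin n) K →ₐ[K] B} :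
    φ = ψ ↔ ∀ j, φ (gammaPoly q j) = ψ (gammaPoly q j) := by
  refine ⟨fun h j => h ▸ rfl, fun h => ?_⟩
  have hX : (fun k => φ (X k)) = fun k => ψ (X k) :=
    eq_of_forall_sum_Iic_smul_eq (w := fun k => q k - 1) (fun k => sub_ne_zero.2 (hq k))
      fun j => by simpa [gammaPoly, Algebra.smul_def] using h j
  exact algHom_ext (congrFun hX)

def IsQWeylAut (q : Fin n → K)
    (σ : Fin n → (MvPolynomial (Fin n) K ≃ₐ[K] MvPolynomial (Fin n) K)) : Prop :=
  ∀ i j : Fin n, σ i (X j) =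
    if j < i then X j
    else if j = i then 1 + C (q i) * X i + ∑ k ∈ Iio i, C (q k - 1) * X k
    else C (q i) * X j

namespace IsQWeylAut

variable {q : Fin n → K}
  {σ : Fin n → (MvPolynomial (Fin n) K ≃ₐ[K] MvPolynomial (Fin n) K)}

theorem apply_gammaPoly_self (hσ : IsQWeylAut q σ) (i : Fin n) :
    σ i (gammaPoly q i) = q i • gammaPoly q i := by
  have hfix : ∑ k ∈ Iio i, C (q k - 1) * σ i (X k) = ∑ k ∈ Iio i, C (q k - 1) * X k :=
    sum_congr rfl fun k hk => by rw [hσ, if_pos (mem_Iio.1 hk)]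
  have hXi : σ i (X i) = 1 + C (q i) * X i + ∑ k ∈ Iio i, C (q k - 1) * X k := by
    simp [hσ i i]
  simp only [gammaPoly, ← Iio_insert, sum_insert notMem_Iio_self, map_add, map_one, map_sum,
    map_mul, smul_eq_C_mul, hXi, algEquiv_apply_C]
  rw [hfix]
  simp only [map_sub, map_one]
  ring

theorem apply_gammaPoly (hσ : IsQWeylAut q σ) (i j : Fin n) :
    σ i (gammaPoly q j) = (if i ≤ j then q i else 1) • gammaPoly q j := by
  split_ifs with hij
  · have hscale : ∑ k ∈ Ioc i j, C (q k - 1) * σ i (X k)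
        = q i • ∑ k ∈ Ioc i j, C (q k - 1) * X k := by
      rw [smul_sum]
      refine sum_congr rfl fun k hk => ?_
      have hik := (mem_Ioc.1 hk).1
      rw [hσ, if_neg hik.not_gt, if_neg hik.ne', smul_eq_C_mul]
      ring
    rw [gammaPoly_eq_add_sum_Ioc q hij, map_add, hσ.apply_gammaPoly_self, smul_add, map_sum]
    simp only [map_mul, algEquiv_apply_C, hscale]
  · have hfix : ∀ k ∈ Iic j, σ i (X k) = X k := fun k hk => by
      rw [hσ, if_pos ((mem_Iic.1 hk).trans_lt (not_le.1 hij))]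
    simp only [gammaPoly, one_smul, map_add, map_one, map_sum, map_mul, algEquiv_apply_C]
    rw [sum_congr rfl fun k hk => by rw [hfix k hk]]

theorem ofFn_zpow_prod_apply_gammaPoly (hσ : IsQWeylAut q σ) (hq : ∀ i, q i ≠ 0)
    (g : Fin n → ℤ) (j : Fin n) :
    (List.ofFn fun i => σ i ^ g i).prod (gammaPoly q j)
      = (∏ i ∈ Iic j, q i ^ g i) • gammaPoly q j := by
  have hscale (i : Fin n) :
      (σ i ^ g i) (gammaPoly q j) = (if i ≤ j then q i else 1) ^ g i • gammaPoly q j :=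
    AlgEquiv.zpow_apply_of_apply_eq_smul (by split_ifs; exacts [hq i, one_ne_zero])
      (hσ.apply_gammaPoly i j) (g i)
  rw [List.ofFn_eq_map, AlgEquiv.list_prod_apply_of_apply_eq_smul _ hscale, ← List.ofFn_eq_map,
    List.prod_ofFn]
  congr 1
  simp [← prod_filter, filter_ge_eq_Iic]

end IsQWeylAut

end QWeyl

theorem stmt_8_general (n : ℕ) (q : Fin n → ℂ)
    (hq : ∀ i, q i ≠ 0 ∧ q i ≠ 1)
    (σ : Fin n → (MvPolynomial (Fin n) ℂ ≃ₐ[ℂ] MvPolynomial (Fin n) ℂ))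
    (hσ : ∀ i j : Fin n, σ i (X j) =
      if j < i then X j
      else if j = i then
        1 + C (q i) * X i + ∑ k ∈ Finset.Iio i, C (q k - 1) * X k
      else C (q i) * X j)
    (α : Fin n → ℂ) :
    ∀ g : Fin n → ℤ,
      Ideal.map ((List.ofFn fun i => σ i ^ g i).prod :
            MvPolynomial (Fin n) ℂ ≃ₐ[ℂ] MvPolynomial (Fin n) ℂ)
          (Ideal.span (Set.range fun j : Fin n => X j - C (α j)))
        = Ideal.span (Set.range fun j : Fin n => X j - C (α j))
      ↔ ∀ j : Fin n,
          ((∏ i ∈ Finset.Iic j, q i ^ (g i)) - 1)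
            * (1 + ∑ k ∈ Finset.Iic j, (q k - 1) * α k) = 0 := by
  intro g
  rw [span_X_sub_C_eq_ker_aeval, AlgHom.map_ker_eq_ker_iff,
    algHom_eq_iff_forall_gammaPoly fun k => (hq k).2]
  refine forall_congr' fun j => ?_
  rw [AlgHom.comp_apply, AlgEquiv.coe_toAlgHom,
    IsQWeylAut.ofFn_zpow_prod_apply_gammaPoly hσ (fun i => (hq i).1), map_smul, aeval_gammaPoly,
    smul_eq_mul, sub_one_mul, sub_eq_zero]

/-- the isotropy group of `m_α`: `σ_1^{g_1}⋯σ_n^{g_n}(m_α) = m_α` iff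
`(q_1^{g_1}⋯q_j^{g_j} − 1)·γ_j = 0` for all `j = 1, …, n`. -/
theorem stmt_8 (n : ℕ) (hn : 1 ≤ n) (q : Fin n → ℂ)
    (hq : ∀ i, q i ≠ 0 ∧ q i ≠ 1)
    (σ : Fin n → (MvPolynomial (Fin n) ℂ ≃ₐ[ℂ] MvPolynomial (Fin n) ℂ))
    (hσ : ∀ i j : Fin n, σ i (X j) =
      if j < i then X j
      else if j = i then
        1 + C (q i) * X i + ∑ k ∈ Finset.Iio i, C (q k - 1) * X k
      else C (q i) * X j)
    (α : Fin n → ℂ) :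
    ∀ g : Fin n → ℤ,
      Ideal.map ((List.ofFn fun i => σ i ^ g i).prod :
            MvPolynomial (Fin n) ℂ ≃ₐ[ℂ] MvPolynomial (Fin n) ℂ)
          (Ideal.span (Set.range fun j : Fin n => X j - C (α j)))
        = Ideal.span (Set.range fun j : Fin n => X j - C (α j))
      ↔ ∀ j : Fin n,
          ((∏ i ∈ Finset.Iic j, q i ^ (g i)) - 1)
            * (1 + ∑ k ∈ Finset.Iic j, (q k - 1) * α k) = 0 :=
  stmt_8_general n q hq σ hσ α
end

section
/- Assume n = 2. For every λ ∈ ℂ and all integers k, l: σ_1^k σ_2^l (n_λ^{(1)}) = n_{λ q_1^{−k}}^{(1)}, and σ_1^k σ_2^l (n_λ^{(2)}) = n_{λ q_1^{−k} q_2^{−l}}^{(2)}. -/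
open MvPolynomial

namespace Stmt9Aux

abbrev P2 := MvPolynomial (Fin 2) ℂ

lemma tauC (τ : P2 ≃ₐ[ℂ] P2) (a : ℂ) : τ (C a) = C a := by
  rw [← MvPolynomial.algebraMap_eq]; exact τ.commutes a

lemma tau_mulC (τ : P2 ≃ₐ[ℂ] P2) (a : ℂ) (p : P2) : τ (C a * p) = C a * τ p := by
  rw [map_mul τ (C a) p, tauC]

lemma ar1 (q A : ℂ) (h0 : q ≠ 0) (h1 : q - 1 ≠ 0) :
    (q⁻¹ * A - 1) * (q - 1)⁻¹ = q⁻¹ * ((A - 1) * (q - 1)⁻¹) - q⁻¹ := by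
  field_simp; ring

lemma ar2 (q A : ℂ) (h1 : q - 1 ≠ 0) :
    (q * A - 1) * (q - 1)⁻¹ = q * ((A - 1) * (q - 1)⁻¹) + 1 := by
  field_simp; ring

lemma pow_s1 (q₁ : ℂ) (hq0 : q₁ ≠ 0) (hq1 : q₁ ≠ 1) (σ₁ : P2 ≃ₐ[ℂ] P2)
    (h0 : σ₁ (X 0) = 1 + C q₁ * X 0) (h1 : σ₁ (X 1) = C q₁ * X 1) :
    ∀ k : ℤ, (σ₁ ^ k) (X 0) = C (q₁ ^ k) * X 0 + C ((q₁ ^ k - 1) * (q₁ - 1)⁻¹)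
      ∧ (σ₁ ^ k) (X 1) = C (q₁ ^ k) * X 1 := by
  have hd : q₁ - 1 ≠ 0 := sub_ne_zero.mpr hq1
  have hsym0 : σ₁.symm (X 0) = C q₁⁻¹ * X 0 - C q₁⁻¹ := by
    rw [AlgEquiv.symm_apply_eq, map_sub σ₁ (C q₁⁻¹ * X 0) (C q₁⁻¹), tau_mulC, tauC, h0,
      show (C q₁⁻¹ : P2) * (1 + C q₁ * X 0) - C q₁⁻¹
        = C (q₁⁻¹ * q₁) * X 0 by rw [C_mul]; ring,
      inv_mul_cancel₀ hq0, C_1, one_mul]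
  have hsym1 : σ₁.symm (X 1) = C q₁⁻¹ * X 1 := by
    rw [AlgEquiv.symm_apply_eq, tau_mulC, h1,
      show (C q₁⁻¹ : P2) * (C q₁ * X 1) = C (q₁⁻¹ * q₁) * X 1 by rw [C_mul]; ring,
      inv_mul_cancel₀ hq0, C_1, one_mul]
  intro k
  induction k using Int.induction_on with
  | zero => simp
  | succ n ih =>
    rw [zpow_add_one, AlgEquiv.mul_apply, AlgEquiv.mul_apply, h0, h1,
      map_add (σ₁ ^ (n:ℤ)) 1 (C q₁ * X 0), map_one, tau_mulC, tau_mulC, ih.1, ih.2]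
    have hpow : q₁ ^ ((n:ℤ)+1) = q₁ * q₁ ^ (n:ℤ) := by rw [zpow_add_one₀ hq0]; ring
    rw [hpow, ar2 q₁ (q₁ ^ (n:ℤ)) hd]
    constructor
    · simp only [C_add, C_mul, C_1]; ring
    · rw [C_mul]; ring
  | pred n ih =>
    have hz : σ₁ ^ (-(n:ℤ) - 1) = σ₁ ^ (-(n:ℤ)) * σ₁⁻¹ := zpow_sub_one _ _
    have hinv : σ₁⁻¹ = σ₁.symm := rfl
    rw [hz, hinv, AlgEquiv.mul_apply, AlgEquiv.mul_apply, hsym0, hsym1,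
      map_sub (σ₁ ^ (-(n:ℤ))) (C q₁⁻¹ * X 0) (C q₁⁻¹), tau_mulC, tau_mulC, tauC, ih.1, ih.2]
    have hpow : q₁ ^ (-(n:ℤ)-1) = q₁⁻¹ * q₁ ^ (-(n:ℤ)) := by rw [zpow_sub_one₀ hq0]; ring
    rw [hpow, ar1 q₁ (q₁ ^ (-(n:ℤ))) hq0 hd]
    constructor
    · simp only [C_sub, C_mul]; ring
    · rw [C_mul]; ring

lemma pow_s2 (q₁ q₂ : ℂ) (hq0 : q₂ ≠ 0) (hq1 : q₂ ≠ 1) (σ₂ : P2 ≃ₐ[ℂ] P2)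
    (h0 : σ₂ (X 0) = X 0) (h1 : σ₂ (X 1) = 1 + C q₂ * X 1 + C (q₁ - 1) * X 0) :
    ∀ l : ℤ, (σ₂ ^ l) (X 0) = X 0
      ∧ (σ₂ ^ l) (X 1) = C (q₂ ^ l) * X 1
          + C ((q₂ ^ l - 1) * (q₂ - 1)⁻¹) * (1 + C (q₁ - 1) * X 0) := by
  have hd : q₂ - 1 ≠ 0 := sub_ne_zero.mpr hq1
  have hsym0 : σ₂.symm (X 0) = X 0 := by
    rw [AlgEquiv.symm_apply_eq, h0]
  have hsym1 : σ₂.symm (X 1) = C q₂⁻¹ * X 1 - C q₂⁻¹ * (1 + C (q₁ - 1) * X 0) := by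
    rw [AlgEquiv.symm_apply_eq,
      map_sub σ₂ (C q₂⁻¹ * X 1) (C q₂⁻¹ * (1 + C (q₁ - 1) * X 0)), tau_mulC, tau_mulC,
      map_add σ₂ 1 (C (q₁ - 1) * X 0), map_one, tau_mulC, h0, h1,
      show (C q₂⁻¹ : P2) * (1 + C q₂ * X 1 + C (q₁-1) * X 0)
          - C q₂⁻¹ * (1 + C (q₁-1) * X 0)
        = C (q₂⁻¹ * q₂) * X 1 by rw [C_mul]; ring,
      inv_mul_cancel₀ hq0, C_1, one_mul]
  intro l
  induction l using Int.induction_on with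
  | zero => simp
  | succ n ih =>
    rw [zpow_add_one, AlgEquiv.mul_apply, AlgEquiv.mul_apply, h0, h1,
      map_add (σ₂ ^ (n:ℤ)) (1 + C q₂ * X 1) (C (q₁-1) * X 0),
      map_add (σ₂ ^ (n:ℤ)) 1 (C q₂ * X 1), map_one, tau_mulC, tau_mulC, ih.1, ih.2]
    have hpow : q₂ ^ ((n:ℤ)+1) = q₂ * q₂ ^ (n:ℤ) := by rw [zpow_add_one₀ hq0]; ring
    rw [hpow, ar2 q₂ (q₂ ^ (n:ℤ)) hd]
    refine ⟨rfl, ?_⟩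
    simp only [C_add, C_mul, C_1]; ring
  | pred n ih =>
    have hz : σ₂ ^ (-(n:ℤ) - 1) = σ₂ ^ (-(n:ℤ)) * σ₂⁻¹ := zpow_sub_one _ _
    have hinv : σ₂⁻¹ = σ₂.symm := rfl
    rw [hz, hinv, AlgEquiv.mul_apply, AlgEquiv.mul_apply, hsym0, hsym1,
      map_sub (σ₂ ^ (-(n:ℤ))) (C q₂⁻¹ * X 1) (C q₂⁻¹ * (1 + C (q₁ - 1) * X 0)),
      tau_mulC, tau_mulC, map_add (σ₂ ^ (-(n:ℤ))) 1 (C (q₁ - 1) * X 0), map_one,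
      tau_mulC, ih.1, ih.2]
    have hpow : q₂ ^ (-(n:ℤ)-1) = q₂⁻¹ * q₂ ^ (-(n:ℤ)) := by rw [zpow_sub_one₀ hq0]; ring
    rw [hpow, ar1 q₂ (q₂ ^ (-(n:ℤ))) hq0 hd]
    refine ⟨rfl, ?_⟩
    simp only [C_sub, C_mul]; ring

lemma span_pair (a b a' b' α γ δ : ℂ) (hα : α ≠ 0) (hγ : γ ≠ 0)
    (σ : P2 ≃ₐ[ℂ] P2)
    (e0 : σ (X 0 - C a) = C α * (X 0 - C a'))
    (e1 : σ (X 1 - C b) = C γ * (X 1 - C b') + C δ * (X 0 - C a')) :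
    Ideal.map σ (Ideal.span {X 0 - C a, X 1 - C b})
      = Ideal.span {X 0 - C a', X 1 - C b'} := by
  have him : (⇑σ) '' {X 0 - C a, X 1 - C b}
      = {C α * (X 0 - C a'), C γ * (X 1 - C b') + C δ * (X 0 - C a')} := by
    rw [Set.image_insert_eq, Set.image_singleton, e0, e1]
  rw [Ideal.map_span, him]
  apply le_antisymm
  · rw [Ideal.span_le]
    rintro p hp
    simp only [Set.mem_insert_iff, Set.mem_singleton_iff] at hp
    have h0' : (X 0 - C a' : P2) ∈ Ideal.span {X 0 - C a', X 1 - C b'} :=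
      Ideal.subset_span (by simp)
    have h1' : (X 1 - C b' : P2) ∈ Ideal.span {X 0 - C a', X 1 - C b'} :=
      Ideal.subset_span (by simp)
    rcases hp with rfl | rfl
    · exact Ideal.mul_mem_left _ _ h0'
    · exact Ideal.add_mem _ (Ideal.mul_mem_left _ _ h1') (Ideal.mul_mem_left _ _ h0')
  · rw [Ideal.span_le]
    rintro p hp
    simp only [Set.mem_insert_iff, Set.mem_singleton_iff] at hp
    set J := Ideal.span ({C α * (X 0 - C a'),
      C γ * (X 1 - C b') + C δ * (X 0 - C a')} : Set P2) with hJ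
    have g0 : C α * (X 0 - C a') ∈ J := Ideal.subset_span (by simp)
    have g1 : C γ * (X 1 - C b') + C δ * (X 0 - C a') ∈ J := Ideal.subset_span (by simp)
    have m0 : X 0 - C a' ∈ J := by
      have h := Ideal.mul_mem_left J (C α⁻¹) g0
      rwa [← mul_assoc, ← C_mul, inv_mul_cancel₀ hα, C_1, one_mul] at h
    rcases hp with rfl | rfl
    · exact m0
    · have h2 : C γ * (X 1 - C b') ∈ J := by
        have h := J.sub_mem g1 (Ideal.mul_mem_left J (C δ) m0)
        simpa using h
      have h := Ideal.mul_mem_left J (C γ⁻¹) h2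
      rwa [← mul_assoc, ← C_mul, inv_mul_cancel₀ hγ, C_1, one_mul] at h

end Stmt9Aux

open Stmt9Aux

/-- in rank two, `σ_1^k σ_2^l (n_λ^{(1)}) = n_{λ q_1^{−k}}^{(1)}` and
`σ_1^k σ_2^l (n_λ^{(2)}) = n_{λ q_1^{−k} q_2^{−l}}^{(2)}`. -/

theorem stmt_9 (q₁ q₂ : ℂ) (hq₁ : q₁ ≠ 0 ∧ q₁ ≠ 1) (hq₂ : q₂ ≠ 0 ∧ q₂ ≠ 1)
    (σ₁ σ₂ : MvPolynomial (Fin 2) ℂ ≃ₐ[ℂ] MvPolynomial (Fin 2) ℂ)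
    (hσ₁ : σ₁ (X 0) = 1 + C q₁ * X 0 ∧ σ₁ (X 1) = C q₁ * X 1)
    (hσ₂ : σ₂ (X 0) = X 0 ∧ σ₂ (X 1) = 1 + C q₂ * X 1 + C (q₁ - 1) * X 0) :
    ∀ (lam : ℂ) (k l : ℤ),
      Ideal.map ((σ₁ ^ k * σ₂ ^ l : MvPolynomial (Fin 2) ℂ ≃ₐ[ℂ] MvPolynomial (Fin 2) ℂ))
          (Ideal.span {X 0 - C ((1 - lam) * (1 - q₁)⁻¹), X 1 - C (lam * (1 - q₂)⁻¹)})
        = Ideal.span {X 0 - C ((1 - lam * q₁ ^ (-k)) * (1 - q₁)⁻¹),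
            X 1 - C (lam * q₁ ^ (-k) * (1 - q₂)⁻¹)} ∧
      Ideal.map ((σ₁ ^ k * σ₂ ^ l : MvPolynomial (Fin 2) ℂ ≃ₐ[ℂ] MvPolynomial (Fin 2) ℂ))
          (Ideal.span {X 0 - C ((1 - q₁)⁻¹), X 1 - C lam})
        = Ideal.span {X 0 - C ((1 - q₁)⁻¹), X 1 - C (lam * q₁ ^ (-k) * q₂ ^ (-l))} := by
  obtain ⟨hq10, hq11⟩ := hq₁
  obtain ⟨hq20, hq21⟩ := hq₂
  obtain ⟨h10, h11⟩ := hσ₁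
  obtain ⟨h20, h21⟩ := hσ₂
  have hd1 : q₁ - 1 ≠ 0 := sub_ne_zero.mpr hq11
  have hd2 : q₂ - 1 ≠ 0 := sub_ne_zero.mpr hq21
  have hd1' : 1 - q₁ ≠ 0 := sub_ne_zero.mpr (fun h => hq11 h.symm)
  have hd2' : 1 - q₂ ≠ 0 := sub_ne_zero.mpr (fun h => hq21 h.symm)
  intro lam k l
  have hu : q₁ ^ k ≠ 0 := zpow_ne_zero k hq10
  have hv : q₂ ^ l ≠ 0 := zpow_ne_zero l hq20
  rw [zpow_neg q₁ k, zpow_neg q₂ l]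
  have T0 : (σ₁ ^ k * σ₂ ^ l) (X 0)
      = C (q₁ ^ k) * X 0 + C ((q₁ ^ k - 1) * (q₁ - 1)⁻¹) := by
    rw [AlgEquiv.mul_apply, (pow_s2 q₁ q₂ hq20 hq21 σ₂ h20 h21 l).1,
      (pow_s1 q₁ hq10 hq11 σ₁ h10 h11 k).1]
  have T1 : (σ₁ ^ k * σ₂ ^ l) (X 1)
      = C (q₂ ^ l * q₁ ^ k) * X 1
        + C ((q₂ ^ l - 1) * (q₂ - 1)⁻¹ * (q₁ - 1) * q₁ ^ k) * X 0
        + C ((q₂ ^ l - 1) * (q₂ - 1)⁻¹ * (1 + (q₁ - 1) * ((q₁ ^ k - 1) * (q₁ - 1)⁻¹))) := by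
    rw [AlgEquiv.mul_apply, (pow_s2 q₁ q₂ hq20 hq21 σ₂ h20 h21 l).2,
      map_add (σ₁ ^ k) (C (q₂ ^ l) * X 1)
        (C ((q₂ ^ l - 1) * (q₂ - 1)⁻¹) * (1 + C (q₁ - 1) * X 0)),
      tau_mulC, tau_mulC, map_add (σ₁ ^ k) 1 (C (q₁ - 1) * X 0), map_one, tau_mulC,
      (pow_s1 q₁ hq10 hq11 σ₁ h10 h11 k).1, (pow_s1 q₁ hq10 hq11 σ₁ h10 h11 k).2]
    simp only [C_add, C_mul, C_1]; ring
  constructor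
  · have e0 : (σ₁ ^ k * σ₂ ^ l) (X 0 - C ((1 - lam) * (1 - q₁)⁻¹))
        = C (q₁ ^ k) * (X 0 - C ((1 - lam * (q₁ ^ k)⁻¹) * (1 - q₁)⁻¹)) := by
      rw [map_sub, tauC, T0]
      rw [show (q₁ ^ k - 1) * (q₁ - 1)⁻¹
          = (1 - lam) * (1 - q₁)⁻¹
            - q₁ ^ k * ((1 - lam * (q₁ ^ k)⁻¹) * (1 - q₁)⁻¹) by field_simp; ring]
      simp only [C_sub, C_mul]; ring
    have e1 : (σ₁ ^ k * σ₂ ^ l) (X 1 - C (lam * (1 - q₂)⁻¹))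
        = C (q₂ ^ l * q₁ ^ k) * (X 1 - C (lam * (q₁ ^ k)⁻¹ * (1 - q₂)⁻¹))
          + C ((q₂ ^ l - 1) * (q₂ - 1)⁻¹ * (q₁ - 1) * q₁ ^ k)
            * (X 0 - C ((1 - lam * (q₁ ^ k)⁻¹) * (1 - q₁)⁻¹)) := by
      rw [map_sub, tauC, T1]
      rw [show (q₂ ^ l - 1) * (q₂ - 1)⁻¹ * (1 + (q₁ - 1) * ((q₁ ^ k - 1) * (q₁ - 1)⁻¹))
          = lam * (1 - q₂)⁻¹
            - q₂ ^ l * q₁ ^ k * (lam * (q₁ ^ k)⁻¹ * (1 - q₂)⁻¹)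
            - (q₂ ^ l - 1) * (q₂ - 1)⁻¹ * (q₁ - 1) * q₁ ^ k
              * ((1 - lam * (q₁ ^ k)⁻¹) * (1 - q₁)⁻¹) by field_simp; ring]
      simp only [C_sub, C_mul]; ring
    exact span_pair _ _ _ _ _ _ _ hu (mul_ne_zero hv hu) _ e0 e1
  · have e0 : (σ₁ ^ k * σ₂ ^ l) (X 0 - C ((1 - q₁)⁻¹))
        = C (q₁ ^ k) * (X 0 - C ((1 - q₁)⁻¹)) := by
      rw [map_sub, tauC, T0]
      rw [show (q₁ ^ k - 1) * (q₁ - 1)⁻¹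
          = (1 - q₁)⁻¹ - q₁ ^ k * (1 - q₁)⁻¹ by field_simp; ring]
      simp only [C_sub, C_mul]; ring
    have e1 : (σ₁ ^ k * σ₂ ^ l) (X 1 - C lam)
        = C (q₂ ^ l * q₁ ^ k) * (X 1 - C (lam * (q₁ ^ k)⁻¹ * (q₂ ^ l)⁻¹))
          + C ((q₂ ^ l - 1) * (q₂ - 1)⁻¹ * (q₁ - 1) * q₁ ^ k)
            * (X 0 - C ((1 - q₁)⁻¹)) := by
      rw [map_sub, tauC, T1]
      rw [show (q₂ ^ l - 1) * (q₂ - 1)⁻¹ * (1 + (q₁ - 1) * ((q₁ ^ k - 1) * (q₁ - 1)⁻¹))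
          = lam - q₂ ^ l * q₁ ^ k * (lam * (q₁ ^ k)⁻¹ * (q₂ ^ l)⁻¹)
            - (q₂ ^ l - 1) * (q₂ - 1)⁻¹ * (q₁ - 1) * q₁ ^ k * (1 - q₁)⁻¹ by
        field_simp; ring]
      simp only [C_sub, C_mul]; ring
    exact span_pair _ _ _ _ _ _ _ hu (mul_ne_zero hv hu) _ e0 e1
end

section
/- Assume n = 2. Then: (i) σ_1^k σ_2^l (n_0) = n_0 for all (k,l) ∈ ℤ²; (ii) for every λ ∈ ℂ \ {0}, {(k,l) ∈ ℤ² : σ_1^kσ_2^l(n_λ^{(1)}) = n_λ^{(1)}} = {(k,l) ∈ ℤ² : q_1^k = 1}; (iii) for every λ ∈ ℂ \ {0}, {(k,l) ∈ ℤ² : σ_1^kσ_2^l(n_λ^{(2)}) = n_λ^{(2)}} = {(k,l) ∈ ℤ² : q_1^k q_2^l = 1}; (iv) for every α = (α_1,α_2) ∈ ℂ² with 1 + (q_1−1)α_1 ≠ 0 and 1 + (q_1−1)α_1 + (q_2−1)α_2 ≠ 0 (equivalently, m_α is not of the form n_μ^{(1)} or n_μ^{(2)} for any μ), {(k,l) ∈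 ℤ² : σ_1^kσ_2^l(m_α) = m_α} = {(k,l) ∈ ℤ² : q_1^k = 1 and q_2^l = 1}. -/
open MvPolynomial

private lemma sub_C_eval_mem (a b : ℂ) (p : MvPolynomial (Fin 2) ℂ) :
    p - C (eval ![a, b] p) ∈ Ideal.span {X 0 - C a, X 1 - C b} := by
  induction p using MvPolynomial.induction_on with
  | C c => simpa only [eval_C, sub_self] using (Ideal.span {X 0 - C a, X 1 - C b}).zero_mem
  | add p q hp hq =>
      have := Ideal.add_mem _ hp hq
      convert this using 1
      rw [map_add, map_add]
      ring
  | mul_X p i hp =>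
      have hX : X i - C (![a, b] i) ∈ Ideal.span {X 0 - C a, X 1 - C b} := by
        fin_cases i
        · exact Ideal.subset_span (Set.mem_insert _ _)
        · exact Ideal.subset_span (Set.mem_insert_of_mem _ rfl)
      have := Ideal.add_mem _ (Ideal.mul_mem_left _ p hX)
        (Ideal.mul_mem_left _ (C (![a, b] i)) hp)
      convert this using 1
      rw [map_mul, eval_X, map_mul]
      ring

private lemma span_eq_ker_s10 (a b : ℂ) :
    Ideal.span {X 0 - C a, X 1 - C b}
      = RingHom.ker (eval ![a, b] : MvPolynomial (Fin 2) ℂ →+* ℂ) := by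
  apply le_antisymm
  · rw [Ideal.span_le]
    rintro p hp
    rcases hp with rfl | rfl <;> simp [RingHom.mem_ker]
  · intro p hp
    rw [RingHom.mem_ker] at hp
    have h := sub_C_eval_mem a b p
    rwa [hp, map_zero, sub_zero] at h

private lemma span_isMaximal (a b : ℂ) :
    (Ideal.span {X (0 : Fin 2) - C a, X 1 - C b}).IsMaximal := by
  rw [span_eq_ker_s10]
  exact RingHom.ker_isMaximal_of_surjective _ (fun c => ⟨C c, eval_C c⟩)

private lemma map_eq_iff (σ : MvPolynomial (Fin 2) ℂ ≃ₐ[ℂ] MvPolynomial (Fin 2) ℂ) (a b : ℂ) :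
    Ideal.map σ (Ideal.span {X 0 - C a, X 1 - C b}) = Ideal.span {X 0 - C a, X 1 - C b} ↔
      eval ![a, b] (σ (X 0)) = a ∧ eval ![a, b] (σ (X 1)) = b := by
  have hcomap : Ideal.map σ (Ideal.span {X 0 - C a, X 1 - C b})
      = Ideal.comap σ.symm (Ideal.span {X 0 - C a, X 1 - C b}) :=
    Ideal.map_comap_of_equiv (σ : MvPolynomial (Fin 2) ℂ ≃+* MvPolynomial (Fin 2) ℂ)
  have hCa : σ (C a) = C a := by
    have := σ.commutes a
    simpa [MvPolynomial.algebraMap_eq] using this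
  have hCb : σ (C b) = C b := by
    have := σ.commutes b
    simpa [MvPolynomial.algebraMap_eq] using this
  constructor
  · intro h
    have h0 : σ (X 0 - C a) ∈ Ideal.map σ (Ideal.span {X 0 - C a, X 1 - C b}) :=
      Ideal.mem_map_of_mem _ (Ideal.subset_span (Set.mem_insert _ _))
    have h1 : σ (X 1 - C b) ∈ Ideal.map σ (Ideal.span {X 0 - C a, X 1 - C b}) :=
      Ideal.mem_map_of_mem _ (Ideal.subset_span (Set.mem_insert_of_mem _ rfl))
    rw [h, span_eq_ker_s10, RingHom.mem_ker] at h0 h1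
    rw [map_sub, hCa, map_sub, eval_C] at h0
    rw [map_sub, hCb, map_sub, eval_C] at h1
    constructor
    · linear_combination (norm := ring_nf) h0
    · linear_combination (norm := ring_nf) h1
  · rintro ⟨h0, h1⟩
    have hmax1 : (Ideal.map σ (Ideal.span {X 0 - C a, X 1 - C b})).IsMaximal := by
      rw [hcomap]
      exact Ideal.comap_isMaximal_of_surjective _ σ.symm.surjective (H := span_isMaximal a b)
    have hle : Ideal.map σ (Ideal.span {X 0 - C a, X 1 - C b})
        ≤ Ideal.span {X 0 - C a, X 1 - C b} := by
      rw [Ideal.map_span, Ideal.span_le]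
      rintro p ⟨g, hg, rfl⟩
      rw [SetLike.mem_coe, span_eq_ker_s10]
      rcases hg with rfl | rfl
      · rw [RingHom.mem_ker, map_sub, hCa]
        simp [h0]
      · rw [RingHom.mem_ker, map_sub, hCb]
        simp [h1]
    exact hmax1.eq_of_le (span_isMaximal a b).ne_top hle

private lemma eigen_zpow (e : MvPolynomial (Fin 2) ℂ ≃ₐ[ℂ] MvPolynomial (Fin 2) ℂ)
    (u : MvPolynomial (Fin 2) ℂ) (c : ℂ) (hc : c ≠ 0) (h : e u = c • u) :
    ∀ k : ℤ, (e ^ k) u = c ^ k • u := by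
  have h2 : u = c • e.symm u := by
    have := congrArg e.symm h
    rwa [e.symm_apply_apply, map_smul] at this
  have hsymm : e.symm u = c⁻¹ • u := ((inv_smul_eq_iff₀ hc).mpr h2).symm
  intro k
  induction k using Int.induction_on with
  | zero => simp
  | succ n hn =>
      rw [zpow_add_one, AlgEquiv.mul_apply, h, map_smul, hn, smul_smul,
        zpow_add_one₀ hc, mul_comm]
  | pred n hn =>
      rw [zpow_sub_one, AlgEquiv.mul_apply]
      have h3 : (e⁻¹ : MvPolynomial (Fin 2) ℂ ≃ₐ[ℂ] MvPolynomial (Fin 2) ℂ) u = c⁻¹ • u := hsymm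
      rw [h3, map_smul, hn, smul_smul, zpow_sub_one₀ hc, mul_comm]

private lemma master (q₁ q₂ : ℂ) (hq₁ : q₁ ≠ 0 ∧ q₁ ≠ 1) (hq₂ : q₂ ≠ 0 ∧ q₂ ≠ 1)
    (σ₁ σ₂ : MvPolynomial (Fin 2) ℂ ≃ₐ[ℂ] MvPolynomial (Fin 2) ℂ)
    (hσ₁ : σ₁ (X 0) = 1 + C q₁ * X 0 ∧ σ₁ (X 1) = C q₁ * X 1)
    (hσ₂ : σ₂ (X 0) = X 0 ∧ σ₂ (X 1) = 1 + C q₂ * X 1 + C (q₁ - 1) * X 0)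
    (k l : ℤ) (a b : ℂ) :
    Ideal.map ((σ₁ ^ k * σ₂ ^ l : MvPolynomial (Fin 2) ℂ ≃ₐ[ℂ] MvPolynomial (Fin 2) ℂ))
        (Ideal.span {X 0 - C a, X 1 - C b}) = Ideal.span {X 0 - C a, X 1 - C b} ↔
      (q₁ ^ k * (1 + (q₁ - 1) * a) = 1 + (q₁ - 1) * a ∧
        q₁ ^ k * q₂ ^ l * (1 + (q₁ - 1) * a + (q₂ - 1) * b)
          = 1 + (q₁ - 1) * a + (q₂ - 1) * b) := by
  set u : MvPolynomial (Fin 2) ℂ := 1 + C (q₁ - 1) * X 0 with hu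
  set v : MvPolynomial (Fin 2) ℂ := 1 + C (q₁ - 1) * X 0 + C (q₂ - 1) * X 1 with hv
  have hC1 : ∀ c : ℂ, σ₁ (C c) = C c := fun c => by
    have := σ₁.commutes c
    simpa [MvPolynomial.algebraMap_eq] using this
  have hC2 : ∀ c : ℂ, σ₂ (C c) = C c := fun c => by
    have := σ₂.commutes c
    simpa [MvPolynomial.algebraMap_eq] using this
  have e1u : σ₁ u = q₁ • u := by
    rw [hu, map_add, map_one, map_mul, hC1, hσ₁.1, smul_eq_C_mul]
    simp only [map_sub, map_one]
    ring
  have e2u : σ₂ u = (1 : ℂ) • u := by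
    rw [hu, map_add, map_one, map_mul, hC2, hσ₂.1, one_smul]
  have e1v : σ₁ v = q₁ • v := by
    rw [hv, map_add, map_add, map_one, map_mul, map_mul, hC1, hC1, hσ₁.1, hσ₁.2, smul_eq_C_mul]
    simp only [map_sub, map_one]
    ring
  have e2v : σ₂ v = q₂ • v := by
    rw [hv, map_add, map_add, map_one, map_mul, map_mul, hC2, hC2, hσ₂.1, hσ₂.2, smul_eq_C_mul]
    simp only [map_sub, map_one]
    ring
  set σ : MvPolynomial (Fin 2) ℂ ≃ₐ[ℂ] MvPolynomial (Fin 2) ℂ := σ₁ ^ k * σ₂ ^ l with hσ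
  have hσu : σ u = (q₁ ^ k) • u := by
    rw [hσ, AlgEquiv.mul_apply, eigen_zpow σ₂ u 1 one_ne_zero e2u l, one_zpow, one_smul,
      eigen_zpow σ₁ u q₁ hq₁.1 e1u k]
  have hσv : σ v = (q₁ ^ k * q₂ ^ l) • v := by
    rw [hσ, AlgEquiv.mul_apply, eigen_zpow σ₂ v q₂ hq₂.1 e2v l, map_smul,
      eigen_zpow σ₁ v q₁ hq₁.1 e1v k, smul_smul, mul_comm]
  have hCσ : ∀ c : ℂ, σ (C c) = C c := fun c => by
    have := σ.commutes c
    simpa [MvPolynomial.algebraMap_eq] using this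
  rw [map_eq_iff]
  set s := eval ![a, b] (σ (X 0)) with hs
  set t := eval ![a, b] (σ (X 1)) with ht
  have eq1 : 1 + (q₁ - 1) * s = q₁ ^ k * (1 + (q₁ - 1) * a) := by
    have h := congrArg (eval ![a, b]) hσu
    simp only [hu, map_add, map_one, map_mul, hCσ, smul_eq_C_mul, eval_C, map_one] at h
    simpa [hs, mul_add, mul_comm, mul_assoc, mul_left_comm] using h
  have eq2 : 1 + (q₁ - 1) * s + (q₂ - 1) * t
      = q₁ ^ k * q₂ ^ l * (1 + (q₁ - 1) * a + (q₂ - 1) * b) := by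
    have h := congrArg (eval ![a, b]) hσv
    simp only [hv, map_add, map_one, map_mul, hCσ, smul_eq_C_mul, eval_C, map_one] at h
    simpa [hs, ht, mul_add, mul_comm, mul_assoc, mul_left_comm] using h
  have hq₁1 : q₁ - 1 ≠ 0 := sub_ne_zero.mpr hq₁.2
  have hq₂1 : q₂ - 1 ≠ 0 := sub_ne_zero.mpr hq₂.2
  constructor
  · rintro ⟨hsa, htb⟩
    rw [hsa] at eq1
    rw [hsa, htb] at eq2
    exact ⟨eq1.symm, eq2.symm⟩
  · rintro ⟨hU, hV⟩
    have hsa : s = a := by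
      have h1 : (q₁ - 1) * s = (q₁ - 1) * a := by linear_combination eq1 + hU
      exact mul_left_cancel₀ hq₁1 h1
    have htb : t = b := by
      have h2 : (q₂ - 1) * t = (q₂ - 1) * b := by
        linear_combination eq2 + hV - (q₁ - 1) * hsa
      exact mul_left_cancel₀ hq₂1 h2
    exact ⟨hsa, htb⟩
/-- isotropy groups of all maximal ideals of `ℂ[t₁,t₂]` under the
`ℤ²`-action of `σ₁, σ₂`: the full group for `n₀`, `{q₁^k = 1}` for `n_λ^{(1)}`,
`{q₁^k q₂^l = 1}` for `n_λ^{(2)}` (`λ ≠ 0`), and `{q₁^k = 1 ∧ q₂^l = 1}` generically. -/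
theorem stmt_10 (q₁ q₂ : ℂ) (hq₁ : q₁ ≠ 0 ∧ q₁ ≠ 1) (hq₂ : q₂ ≠ 0 ∧ q₂ ≠ 1)
    (σ₁ σ₂ : MvPolynomial (Fin 2) ℂ ≃ₐ[ℂ] MvPolynomial (Fin 2) ℂ)
    (hσ₁ : σ₁ (X 0) = 1 + C q₁ * X 0 ∧ σ₁ (X 1) = C q₁ * X 1)
    (hσ₂ : σ₂ (X 0) = X 0 ∧ σ₂ (X 1) = 1 + C q₂ * X 1 + C (q₁ - 1) * X 0) :
    (∀ k l : ℤ,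
      Ideal.map ((σ₁ ^ k * σ₂ ^ l : MvPolynomial (Fin 2) ℂ ≃ₐ[ℂ] MvPolynomial (Fin 2) ℂ))
          (Ideal.span {X 0 - C ((1 - q₁)⁻¹), X 1 - C (0 : ℂ)})
        = Ideal.span {X 0 - C ((1 - q₁)⁻¹), X 1 - C (0 : ℂ)}) ∧
    (∀ lam : ℂ, lam ≠ 0 →
      {p : ℤ × ℤ |
          Ideal.map ((σ₁ ^ p.1 * σ₂ ^ p.2 :
                MvPolynomial (Fin 2) ℂ ≃ₐ[ℂ] MvPolynomial (Fin 2) ℂ))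
              (Ideal.span {X 0 - C ((1 - lam) * (1 - q₁)⁻¹),
                X 1 - C (lam * (1 - q₂)⁻¹)})
            = Ideal.span {X 0 - C ((1 - lam) * (1 - q₁)⁻¹),
                X 1 - C (lam * (1 - q₂)⁻¹)}}
        = {p : ℤ × ℤ | q₁ ^ p.1 = 1}) ∧
    (∀ lam : ℂ, lam ≠ 0 →
      {p : ℤ × ℤ |
          Ideal.map ((σ₁ ^ p.1 * σ₂ ^ p.2 :
                MvPolynomial (Fin 2) ℂ ≃ₐ[ℂ] MvPolynomial (Fin 2) ℂ))
              (Ideal.span {X 0 - C ((1 - q₁)⁻¹), X 1 - C lam})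
            = Ideal.span {X 0 - C ((1 - q₁)⁻¹), X 1 - C lam}}
        = {p : ℤ × ℤ | q₁ ^ p.1 * q₂ ^ p.2 = 1}) ∧
    (∀ α₁ α₂ : ℂ, 1 + (q₁ - 1) * α₁ ≠ 0 → 1 + (q₁ - 1) * α₁ + (q₂ - 1) * α₂ ≠ 0 →
      {p : ℤ × ℤ |
          Ideal.map ((σ₁ ^ p.1 * σ₂ ^ p.2 :
                MvPolynomial (Fin 2) ℂ ≃ₐ[ℂ] MvPolynomial (Fin 2) ℂ))
              (Ideal.span {X 0 - C α₁, X 1 - C α₂})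
            = Ideal.span {X 0 - C α₁, X 1 - C α₂}}
        = {p : ℤ × ℤ | q₁ ^ p.1 = 1 ∧ q₂ ^ p.2 = 1}) := by
  have h1q₁ : (1 : ℂ) - q₁ ≠ 0 := sub_ne_zero.mpr (Ne.symm hq₁.2)
  have h1q₂ : (1 : ℂ) - q₂ ≠ 0 := sub_ne_zero.mpr (Ne.symm hq₂.2)
  have hU0 : 1 + (q₁ - 1) * (1 - q₁)⁻¹ = 0 := by field_simp; ring
  refine ⟨?_, ?_, ?_, ?_⟩
  · intro k l
    rw [master q₁ q₂ hq₁ hq₂ σ₁ σ₂ hσ₁ hσ₂]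
    rw [hU0]
    norm_num
  · intro lam hlam
    ext p
    simp only [Set.mem_setOf_eq]
    rw [master q₁ q₂ hq₁ hq₂ σ₁ σ₂ hσ₁ hσ₂]
    have hU : 1 + (q₁ - 1) * ((1 - lam) * (1 - q₁)⁻¹) = lam := by field_simp; ring
    have hV : 1 + (q₁ - 1) * ((1 - lam) * (1 - q₁)⁻¹) + (q₂ - 1) * (lam * (1 - q₂)⁻¹) = 0 := by
      rw [hU]; field_simp; ring
    rw [hV, hU]
    simp [mul_left_eq_self₀, hlam]
  · intro lam hlam
    ext p
    simp only [Set.mem_setOf_eq]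
    rw [master q₁ q₂ hq₁ hq₂ σ₁ σ₂ hσ₁ hσ₂]
    rw [hU0]
    have hV : (0 : ℂ) + (q₂ - 1) * lam ≠ 0 := by
      rw [zero_add]
      exact mul_ne_zero (sub_ne_zero.mpr hq₂.2) hlam
    simp [mul_left_eq_self₀, hV, sub_ne_zero.mpr hq₂.2, hlam]
  · intro α₁ α₂ hU hV
    ext p
    simp only [Set.mem_setOf_eq]
    rw [master q₁ q₂ hq₁ hq₂ σ₁ σ₂ hσ₁ hσ₂]
    rw [mul_left_eq_self₀, mul_left_eq_self₀]
    simp only [hU, hV, or_false]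
    constructor
    · rintro ⟨h1, h2⟩
      rw [h1, one_mul] at h2
      exact ⟨h1, h2⟩
    · rintro ⟨h1, h2⟩
      rw [h1, h2, one_mul]
      exact ⟨rfl, rfl⟩
end

section
/- Let α ∈ ℂ^n and suppose the family {1, α_1, …, α_n} ⊆ ℂ is linearly independent over the subfield ℚ(q_1,…,q_n) of ℂ (the smallest subfield containing q_1,…,q_n). Then for every j ∈ {1,…,n} and every integer i ∈ ℤ, γ_j ≠ q_j^i · γ_{j−1}. Equivalently, no ideal σ_1^{g_1}⋯σ_n^{g_n}(m_α), g ∈ ℤ^n, contains t_j for any j. -/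
open MvPolynomial

namespace Stmt11Aux

variable {n : ℕ} (q : Fin n → ℂ)
  (σ : Fin n → (MvPolynomial (Fin n) ℂ ≃ₐ[ℂ] MvPolynomial (Fin n) ℂ))

noncomputable def F (τ : MvPolynomial (Fin n) ℂ ≃ₐ[ℂ] MvPolynomial (Fin n) ℂ)
    (b : Fin n → ℂ) : Fin n → ℂ := fun j => aeval b (τ (X j))

lemma aeval_F (τ : MvPolynomial (Fin n) ℂ ≃ₐ[ℂ] MvPolynomial (Fin n) ℂ)
    (b : Fin n → ℂ) (p : MvPolynomial (Fin n) ℂ) :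
    aeval (F τ b) p = aeval b (τ p) := by
  have h : (aeval (F τ b) : MvPolynomial (Fin n) ℂ →ₐ[ℂ] ℂ)
      = (aeval b).comp τ.toAlgHom := by
    apply MvPolynomial.algHom_ext
    intro j
    simp [F]
  exact DFunLike.congr_fun h p

lemma F_one (b : Fin n → ℂ) :
    F (1 : MvPolynomial (Fin n) ℂ ≃ₐ[ℂ] MvPolynomial (Fin n) ℂ) b = b := by
  funext j; simp [F]

lemma F_mul (τ₁ τ₂ : MvPolynomial (Fin n) ℂ ≃ₐ[ℂ] MvPolynomial (Fin n) ℂ)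
    (b : Fin n → ℂ) : F (τ₁ * τ₂) b = F τ₂ (F τ₁ b) := by
  funext j
  simp only [F, AlgEquiv.mul_apply]
  rw [aeval_F]

noncomputable def G (s : Finset (Fin n)) (b : Fin n → ℂ) : ℂ :=
  1 + ∑ k ∈ s, (q k - 1) * b k

variable (hσ : ∀ i j : Fin n, σ i (X j) =
      if j < i then X j
      else if j = i then
        1 + C (q i) * X i + ∑ k ∈ Finset.Iio i, C (q k - 1) * X k
      else C (q i) * X j)

include hσ

lemma G_step (i : Fin n) (s : Finset (Fin n))
    (hs : ∀ a b : Fin n, a ≤ b → b ∈ s → a ∈ s) (b : Fin n → ℂ) :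
    G q s (F (σ i) b) = (if i ∈ s then q i else 1) * G q s b := by
  have hF : ∀ j, F (σ i) b j =
      if j < i then b j
      else if j = i then 1 + q i * b i + ∑ k ∈ Finset.Iio i, (q k - 1) * b k
      else q i * b j := by
    intro j
    simp only [F, hσ i j]
    split_ifs with h1 h2 <;> simp
  by_cases hi : i ∈ s
  · rw [if_pos hi]
    have hsub : Finset.Iic i ⊆ s := fun a ha => hs a i (Finset.mem_Iic.mp ha) hi
    rw [G, G, ← Finset.sum_sdiff hsub, ← Finset.sum_sdiff hsub]
    have h1 : ∑ k ∈ s \ Finset.Iic i, (q k - 1) * F (σ i) b k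
        = q i * ∑ k ∈ s \ Finset.Iic i, (q k - 1) * b k := by
      rw [Finset.mul_sum]
      apply Finset.sum_congr rfl
      intro k hk
      have hk' : ¬ k ≤ i := fun h => (Finset.mem_sdiff.mp hk).2 (Finset.mem_Iic.mpr h)
      have hik : i < k := lt_of_not_ge hk'
      rw [hF k, if_neg (by exact not_lt_of_gt hik), if_neg (by exact fun h => hk' h.le)]
      ring
    have h2 : ∑ k ∈ Finset.Iic i, (q k - 1) * F (σ i) b k
        = (q i - 1) * (1 + q i * b i + ∑ k ∈ Finset.Iio i, (q k - 1) * b k)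
          + ∑ k ∈ Finset.Iio i, (q k - 1) * b k := by
      rw [← Finset.Iio_insert i, Finset.sum_insert (by simp),
        hF i, if_neg (lt_irrefl i), if_pos rfl]
      congr 1
      apply Finset.sum_congr rfl
      intro k hk
      rw [hF k, if_pos (Finset.mem_Iio.mp hk)]
    have h3 : ∑ k ∈ Finset.Iic i, (q k - 1) * b k
        = (q i - 1) * b i + ∑ k ∈ Finset.Iio i, (q k - 1) * b k := by
      rw [← Finset.Iio_insert i, Finset.sum_insert (by simp)]
    rw [h1, h2, h3]
    ring
  · rw [if_neg hi, one_mul, G, G]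
    congr 1
    apply Finset.sum_congr rfl
    intro k hk
    have hki : k < i := by
      by_contra h
      exact hi (hs i k (le_of_not_gt h) hk)
    rw [hF k, if_pos hki]

lemma G_inv (i : Fin n) (hq0 : q i ≠ 0) (s : Finset (Fin n))
    (hs : ∀ a b : Fin n, a ≤ b → b ∈ s → a ∈ s) (b : Fin n → ℂ) :
    G q s (F (σ i)⁻¹ b) = (if i ∈ s then (q i)⁻¹ else 1) * G q s b := by
  have h := G_step q σ hσ i s hs (F (σ i)⁻¹ b)
  rw [show F (σ i) (F (σ i)⁻¹ b) = b by rw [← F_mul, inv_mul_cancel, F_one]] at h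
  split_ifs at h ⊢ with hi
  · rw [h, inv_mul_cancel_left₀ hq0]
  · rw [one_mul] at h ⊢; exact h.symm

lemma G_zpow (i : Fin n) (hq0 : q i ≠ 0) (m : ℤ) (s : Finset (Fin n))
    (hs : ∀ a b : Fin n, a ≤ b → b ∈ s → a ∈ s) (b : Fin n → ℂ) :
    G q s (F (σ i ^ m) b) = (if i ∈ s then q i ^ m else 1) * G q s b := by
  induction m using Int.induction_on with
  | zero => simp [F_one]
  | succ m ih =>
    rw [show (σ i ^ ((m : ℤ) + 1)) = σ i ^ (m : ℤ) * σ i from zpow_add_one _ _, F_mul,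
      G_step q σ hσ i s hs, ih]
    split_ifs with hi
    · rw [← mul_assoc]
      congr 1
      rw [mul_comm, ← zpow_add_one₀ hq0]
    · ring
  | pred m ih =>
    rw [show (σ i ^ (-(m : ℤ) - 1)) = σ i ^ (-(m : ℤ)) * (σ i)⁻¹ from zpow_sub_one _ _, F_mul,
      G_inv q σ hσ i hq0 s hs, ih]
    split_ifs with hi
    · rw [← mul_assoc]
      congr 1
      rw [mul_comm, ← zpow_sub_one₀ hq0]
    · ring

lemma G_list (hq0 : ∀ i, q i ≠ 0) (l : List (Fin n × ℤ)) (s : Finset (Fin n))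
    (hs : ∀ a b : Fin n, a ≤ b → b ∈ s → a ∈ s) (b : Fin n → ℂ) :
    G q s (F ((l.map fun p => σ p.1 ^ p.2).prod) b)
      = (l.map fun p => if p.1 ∈ s then q p.1 ^ p.2 else 1).prod * G q s b := by
  induction l generalizing b with
  | nil => simp [F_one]
  | cons p t ih =>
    rw [List.map_cons, List.prod_cons, F_mul, ih, G_zpow q σ hσ p.1 (hq0 p.1) p.2 s hs,
      List.map_cons, List.prod_cons]
    ring

end Stmt11Aux

open Stmt11Aux

/-- if `{1, α₁, …, α_n}` is linearly independent over `ℚ(q₁,…,q_n)`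
(the smallest subfield of `ℂ` containing the `q i`), then `γ_j ≠ q_j^i γ_{j−1}` for
all `j` and all integers `i`; equivalently no ideal in the orbit of `m_α`
contains any `t j`. -/
theorem stmt_11 (n : ℕ) (hn : 1 ≤ n) (q : Fin n → ℂ)
    (hq : ∀ i, q i ≠ 0 ∧ q i ≠ 1)
    (σ : Fin n → (MvPolynomial (Fin n) ℂ ≃ₐ[ℂ] MvPolynomial (Fin n) ℂ))
    (hσ : ∀ i j : Fin n, σ i (X j) =
      if j < i then X j
      else if j = i then
        1 + C (q i) * X i + ∑ k ∈ Finset.Iio i, C (q k - 1) * X k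
      else C (q i) * X j)
    (α : Fin n → ℂ)
    (hind : LinearIndependent (Subfield.closure (Set.range q))
      (fun i : Fin (n + 1) => (Fin.cases 1 α i : ℂ))) :
    (∀ (j : Fin n) (i : ℤ),
      (1 + ∑ k ∈ Finset.Iic j, (q k - 1) * α k)
        ≠ q j ^ i * (1 + ∑ k ∈ Finset.Iio j, (q k - 1) * α k)) ∧
    (∀ (g : Fin n → ℤ) (j : Fin n),
      X j ∉ Ideal.map ((List.ofFn fun i => σ i ^ g i).prod :
            MvPolynomial (Fin n) ℂ ≃ₐ[ℂ] MvPolynomial (Fin n) ℂ)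
          (Ideal.span (Set.range fun j : Fin n => X j - C (α j)))) := by
  set K := Subfield.closure (Set.range q) with hK
  -- Part 1
  have h1 : ∀ (j : Fin n) (i : ℤ),
      (1 + ∑ k ∈ Finset.Iic j, (q k - 1) * α k)
        ≠ q j ^ i * (1 + ∑ k ∈ Finset.Iio j, (q k - 1) * α k) := by
    intro j i h
    have hqK : ∀ k, q k ∈ K := fun k => Subfield.subset_closure ⟨k, rfl⟩
    set u : ℂ := q j ^ i with hu
    have huK : u ∈ K := K.zpow_mem (hqK j) i
    set cv : Fin n → ℂ := fun k =>
      if k < j then (q k - 1) * (1 - u) else if k = j then q j - 1 else 0 with hcv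
    have hcvK : ∀ k, cv k ∈ K := by
      intro k
      simp only [hcv]
      split_ifs
      · exact K.mul_mem (K.sub_mem (hqK k) K.one_mem) (K.sub_mem K.one_mem huK)
      · exact K.sub_mem (hqK j) K.one_mem
      · exact K.zero_mem
    set c : Fin (n + 1) → K :=
      Fin.cases ⟨1 - u, K.sub_mem K.one_mem huK⟩ (fun k => ⟨cv k, hcvK k⟩) with hc
    have hsum : ∑ i, c i • (Fin.cases 1 α i : ℂ) = 0 := by
      rw [Fin.sum_univ_succ]
      simp only [hc, Fin.cases_zero, Fin.cases_succ, Subfield.smul_def, smul_eq_mul]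
      have hsum2 : ∑ k : Fin n, cv k * α k
          = (q j - 1) * α j + ∑ k ∈ Finset.Iio j, ((q k - 1) * (1 - u)) * α k := by
        rw [show ∑ k : Fin n, cv k * α k = ∑ k ∈ Finset.Iic j, cv k * α k by
          symm
          apply Finset.sum_subset (Finset.subset_univ _)
          intro x _ hx
          have h1 : ¬ x < j := fun hlt => hx (Finset.mem_Iic.mpr hlt.le)
          have h2 : x ≠ j := fun he => hx (Finset.mem_Iic.mpr he.le)
          simp [hcv, h1, h2]]
        rw [← Finset.Iio_insert j, Finset.sum_insert (by simp)]
        congr 1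
        · simp [hcv]
        · apply Finset.sum_congr rfl
          intro k hk
          simp [hcv, Finset.mem_Iio.mp hk]
      push_cast
      rw [hsum2]
      have h3 : ∑ k ∈ Finset.Iic j, (q k - 1) * α k
          = (q j - 1) * α j + ∑ k ∈ Finset.Iio j, (q k - 1) * α k := by
        rw [← Finset.Iio_insert j, Finset.sum_insert (by simp)]
      rw [h3] at h
      have hms : ∑ k ∈ Finset.Iio j, ((q k - 1) * (1 - u)) * α k
          = (1 - u) * ∑ k ∈ Finset.Iio j, (q k - 1) * α k := by
        rw [Finset.mul_sum]; apply Finset.sum_congr rfl; intro k _; ring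
      rw [hms]
      linear_combination h
    have := Fintype.linearIndependent_iff.mp hind c hsum (Fin.succ j)
    rw [hc] at this
    simp only [Fin.cases_succ] at this
    have hz : q j - 1 = 0 := by simpa [hcv] using congrArg Subtype.val this
    exact (hq j).2 (sub_eq_zero.mp hz)
  refine ⟨h1, ?_⟩
  -- Part 2
  intro g j hmem
  set φ : MvPolynomial (Fin n) ℂ ≃ₐ[ℂ] MvPolynomial (Fin n) ℂ :=
    (List.ofFn fun i => σ i ^ g i).prod with hφdef
  set c : Fin n → ℂ := F φ.symm α with hcdef
  -- X j ∈ map φ m  →  c j = 0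
  obtain ⟨x, hx, hφx⟩ := (Ideal.mem_map_iff_of_surjective φ φ.surjective).mp hmem
  have hx0 : aeval α x = 0 := by
    have hle : Ideal.span (Set.range fun j : Fin n => X j - C (α j))
        ≤ RingHom.ker (aeval α : MvPolynomial (Fin n) ℂ →ₐ[ℂ] ℂ) := by
      rw [Ideal.span_le]
      rintro _ ⟨k, rfl⟩
      simp [RingHom.mem_ker]
    exact hle hx
  have hcj : c j = 0 := by
    have : aeval c (φ x) = aeval α x := by
      rw [hcdef, aeval_F, AlgEquiv.symm_apply_apply]
    rw [hφx] at this
    simpa using this.trans hx0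
  -- transport γ's
  have hkey : ∀ s : Finset (Fin n), (∀ a b : Fin n, a ≤ b → b ∈ s → a ∈ s) →
      G q s α = (∏ i, if i ∈ s then q i ^ g i else 1) * G q s c := by
    intro s hs
    have hid : F φ c = α := by
      rw [hcdef, ← F_mul, show φ.symm = φ⁻¹ from rfl, inv_mul_cancel, F_one]
    have hφl : φ = ((List.ofFn fun i => ((i : Fin n), g i)).map fun p => σ p.1 ^ p.2).prod := by
      rw [List.map_ofFn]; rfl
    have := G_list q σ hσ (fun i => (hq i).1) (List.ofFn fun i => ((i : Fin n), g i)) s hs c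
    rw [← hφl, hid] at this
    rw [this, List.map_ofFn, List.prod_ofFn]
    rfl
  have hIic := hkey (Finset.Iic j) (fun a b hab hb => Finset.mem_Iic.mpr
    (hab.trans (Finset.mem_Iic.mp hb)))
  have hIio := hkey (Finset.Iio j) (fun a b hab hb => Finset.mem_Iio.mpr
    (lt_of_le_of_lt hab (Finset.mem_Iio.mp hb)))
  have hGc : G q (Finset.Iic j) c = G q (Finset.Iio j) c := by
    rw [G, G, ← Finset.Iio_insert j, Finset.sum_insert (by simp), hcj]
    ring
  have hprod : (∏ i, if i ∈ Finset.Iic j then q i ^ g i else 1)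
      = q j ^ g j * ∏ i, if i ∈ Finset.Iio j then q i ^ g i else 1 := by
    rw [Finset.prod_ite_mem, Finset.prod_ite_mem, Finset.univ_inter, Finset.univ_inter,
      ← Finset.Iio_insert j, Finset.prod_insert (by simp)]
  apply h1 j (g j)
  show G q (Finset.Iic j) α = q j ^ g j * G q (Finset.Iio j) α
  rw [hIic, hIio, hGc, hprod]
  ring
end

section
/- In the rank-two quantized Weyl algebra A_2^{q̄,Λ}, write Z_j^k := x_j^k for k ≥ 0 and Z_j^k := y_j^{−k} for k < 0 (j = 1, 2). Then for all integers k, l ∈ ℤ: Z_1^k · Z_2^l = q_1^{k·max(l,0)} · λ_{12}^{k·l} · Z_2^l · Z_1^k. -/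
/-- Defining relations of the rank-two quantized Weyl algebra `A_2^{q̄,Λ}`:
generators `x₁ = ι 0`, `x₂ = ι 1`, `y₁ = ι 2`, `y₂ = ι 3`. -/
inductive QW2Rel (q₁ q₂ : ℂ) (lam : ℂˣ) :
    FreeAlgebra ℂ (Fin 4) → FreeAlgebra ℂ (Fin 4) → Prop
  | xx : QW2Rel q₁ q₂ lam (FreeAlgebra.ι ℂ 0 * FreeAlgebra.ι ℂ 1)
      ((q₁ * lam) • (FreeAlgebra.ι ℂ 1 * FreeAlgebra.ι ℂ 0))
  | yy : QW2Rel q₁ q₂ lam (FreeAlgebra.ι ℂ 2 * FreeAlgebra.ι ℂ 3)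
      ((lam : ℂ) • (FreeAlgebra.ι ℂ 3 * FreeAlgebra.ι ℂ 2))
  | xy : QW2Rel q₁ q₂ lam (FreeAlgebra.ι ℂ 0 * FreeAlgebra.ι ℂ 3)
      (((lam⁻¹ : ℂˣ) : ℂ) • (FreeAlgebra.ι ℂ 3 * FreeAlgebra.ι ℂ 0))
  | xy' : QW2Rel q₁ q₂ lam (FreeAlgebra.ι ℂ 1 * FreeAlgebra.ι ℂ 2)
      ((q₁ * lam) • (FreeAlgebra.ι ℂ 2 * FreeAlgebra.ι ℂ 1))
  | weyl₁ : QW2Rel q₁ q₂ lam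
      (FreeAlgebra.ι ℂ 0 * FreeAlgebra.ι ℂ 2 - q₁ • (FreeAlgebra.ι ℂ 2 * FreeAlgebra.ι ℂ 0)) 1
  | weyl₂ : QW2Rel q₁ q₂ lam
      (FreeAlgebra.ι ℂ 1 * FreeAlgebra.ι ℂ 3 - q₂ • (FreeAlgebra.ι ℂ 3 * FreeAlgebra.ι ℂ 1))
      (1 + (q₁ - 1) • (FreeAlgebra.ι ℂ 2 * FreeAlgebra.ι ℂ 0))

/-- The rank-two quantized Weyl algebra. -/
abbrev QW2 (q₁ q₂ : ℂ) (lam : ℂˣ) : Type := RingQuot (QW2Rel q₁ q₂ lam)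

/-- The generators `x₁, x₂, y₁, y₂` of `QW2`. -/
noncomputable def QW2gen (q₁ q₂ : ℂ) (lam : ℂˣ) (i : Fin 4) : QW2 q₁ q₂ lam :=
  RingQuot.mkAlgHom ℂ (QW2Rel q₁ q₂ lam) (FreeAlgebra.ι ℂ i)

/-- `Z x y k = x^k` for `k ≥ 0` and `y^{−k}` for `k < 0`. -/
noncomputable def Zword {A : Type*} [Monoid A] (x y : A) (k : ℤ) : A :=
  if 0 ≤ k then x ^ k.toNat else y ^ (-k).toNat

/-! `Z₁^k` is a power of `x₁` or `y₁` and `Z₂^l` a power of `x₂` or `y₂`, and each of the four pairs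
skew-commutes by a defining relation (`y₁ x₂ = (q₁λ)⁻¹ x₂ y₁` by inverting `x₂ y₁ = q₁λ y₁ x₂`).
A relation `a b = c b a` gives `a^m b^n = c^{mn} b^n a^m`, and in each sign case of `k, l` the
scalar `c^{mn}` is `q₁^{k max(l,0)} λ^{kl}`. -/

section SkewCommute

variable {R A : Type*} [CommSemiring R] [Semiring A] [Algebra R A] {a b : A} {c : R}

theorem mul_pow_eq_smul_pow_mul (h : a * b = c • (b * a)) (n : ℕ) :
    a * b ^ n = c ^ n • (b ^ n * a) := by
  induction n with
  | zero => simp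
  | succ n ih =>
    calc a * b ^ (n + 1) = (a * b) * b ^ n := by rw [pow_succ', mul_assoc]
      _ = c • (b * (a * b ^ n)) := by rw [h, smul_mul_assoc, mul_assoc]
      _ = c ^ (n + 1) • (b ^ (n + 1) * a) := by
        rw [ih, mul_smul_comm, smul_smul, ← pow_succ', ← mul_assoc, ← pow_succ']

theorem pow_mul_pow_eq_smul_pow_mul_pow (h : a * b = c • (b * a)) (m n : ℕ) :
    a ^ m * b ^ n = c ^ (m * n) • (b ^ n * a ^ m) := by
  induction m with
  | zero => simp
  | succ m ih =>
    calc a ^ (m + 1) * b ^ n = a * (a ^ m * b ^ n) := by rw [pow_succ', mul_assoc]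
      _ = c ^ (m * n) • ((a * b ^ n) * a ^ m) := by rw [ih, mul_smul_comm, mul_assoc]
      _ = c ^ ((m + 1) * n) • (b ^ n * a ^ (m + 1)) := by
        rw [mul_pow_eq_smul_pow_mul h, smul_mul_assoc, smul_smul, ← pow_add, mul_assoc,
          ← pow_succ', add_one_mul, add_comm (m * n) n]

end SkewCommute

theorem mul_eq_inv_smul_mul_of_mul_eq_smul {K A : Type*} [Field K] [Semiring A] [Algebra K A]
    {a b : A} {c : K} (hc : c ≠ 0) (h : a * b = c • (b * a)) : b * a = c⁻¹ • (a * b) := by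
  rw [h, smul_smul, inv_mul_cancel₀ hc, one_smul]

section Zword

variable {A : Type*} [Monoid A] (x y : A) (n : ℕ)

@[simp]
theorem Zword_natCast : Zword x y n = x ^ n := by
  simp [Zword]

@[simp]
theorem Zword_neg_natCast : Zword x y (-n) = y ^ n := by
  unfold Zword
  split_ifs with h
  · simp [show n = 0 by omega]
  · simp

end Zword

namespace QW2

variable (q₁ q₂ : ℂ) (lam : ℂˣ)

theorem x₁_mul_x₂ :
    QW2gen q₁ q₂ lam 0 * QW2gen q₁ q₂ lam 1 =
      (q₁ * lam) • (QW2gen q₁ q₂ lam 1 * QW2gen q₁ q₂ lam 0) := by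
  simpa [QW2gen] using RingQuot.mkAlgHom_rel ℂ (QW2Rel.xx (q₁ := q₁) (q₂ := q₂) (lam := lam))

theorem y₁_mul_y₂ :
    QW2gen q₁ q₂ lam 2 * QW2gen q₁ q₂ lam 3 =
      (lam : ℂ) • (QW2gen q₁ q₂ lam 3 * QW2gen q₁ q₂ lam 2) := by
  simpa [QW2gen] using RingQuot.mkAlgHom_rel ℂ (QW2Rel.yy (q₁ := q₁) (q₂ := q₂) (lam := lam))

theorem x₁_mul_y₂ :
    QW2gen q₁ q₂ lam 0 * QW2gen q₁ q₂ lam 3 =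
      (lam : ℂ)⁻¹ • (QW2gen q₁ q₂ lam 3 * QW2gen q₁ q₂ lam 0) := by
  simpa [QW2gen] using RingQuot.mkAlgHom_rel ℂ (QW2Rel.xy (q₁ := q₁) (q₂ := q₂) (lam := lam))

theorem x₂_mul_y₁ :
    QW2gen q₁ q₂ lam 1 * QW2gen q₁ q₂ lam 2 =
      (q₁ * lam) • (QW2gen q₁ q₂ lam 2 * QW2gen q₁ q₂ lam 1) := by
  simpa [QW2gen] using RingQuot.mkAlgHom_rel ℂ (QW2Rel.xy' (q₁ := q₁) (q₂ := q₂) (lam := lam))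

theorem y₁_mul_x₂ (hq₁ : q₁ ≠ 0) :
    QW2gen q₁ q₂ lam 2 * QW2gen q₁ q₂ lam 1 =
      (q₁ * lam)⁻¹ • (QW2gen q₁ q₂ lam 1 * QW2gen q₁ q₂ lam 2) :=
  mul_eq_inv_smul_mul_of_mul_eq_smul (mul_ne_zero hq₁ lam.ne_zero) (x₂_mul_y₁ q₁ q₂ lam)

end QW2

theorem stmt_12_general (q₁ q₂ : ℂ) (hq₁ : q₁ ≠ 0 ∧ q₁ ≠ 1)
    (lam : ℂˣ) (k l : ℤ) :
    Zword (QW2gen q₁ q₂ lam 0) (QW2gen q₁ q₂ lam 2) k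
        * Zword (QW2gen q₁ q₂ lam 1) (QW2gen q₁ q₂ lam 3) l
      = (q₁ ^ (k * max l 0) * (lam : ℂ) ^ (k * l)) •
        (Zword (QW2gen q₁ q₂ lam 1) (QW2gen q₁ q₂ lam 3) l
          * Zword (QW2gen q₁ q₂ lam 0) (QW2gen q₁ q₂ lam 2) k) := by
  obtain ⟨m, rfl | rfl⟩ := k.eq_nat_or_neg <;> obtain ⟨n, rfl | rfl⟩ := l.eq_nat_or_neg <;>
    simp only [Zword_natCast, Zword_neg_natCast]
  · rw [pow_mul_pow_eq_smul_pow_mul_pow (QW2.x₁_mul_x₂ q₁ q₂ lam)]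
    simp only [Nat.cast_nonneg, max_eq_left, ← Nat.cast_mul, zpow_natCast, mul_pow]
  · rw [pow_mul_pow_eq_smul_pow_mul_pow (QW2.x₁_mul_y₂ q₁ q₂ lam)]
    simp only [max_eq_right (neg_nonpos.2 (Int.natCast_nonneg n)), mul_zero, zpow_zero, one_mul,
      mul_neg, ← Nat.cast_mul, zpow_neg, zpow_natCast, inv_pow]
  · rw [pow_mul_pow_eq_smul_pow_mul_pow (QW2.y₁_mul_x₂ q₁ q₂ lam hq₁.1)]
    simp only [Nat.cast_nonneg, max_eq_left, neg_mul, ← Nat.cast_mul, zpow_neg, zpow_natCast,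
      inv_pow, mul_pow, mul_inv]
  · rw [pow_mul_pow_eq_smul_pow_mul_pow (QW2.y₁_mul_y₂ q₁ q₂ lam)]
    simp only [max_eq_right (neg_nonpos.2 (Int.natCast_nonneg n)), mul_zero, zpow_zero, one_mul,
      neg_mul_neg, ← Nat.cast_mul, zpow_natCast]

/-- in `A_2^{q̄,Λ}`, for all integers `k, l`,
`Z₁^k · Z₂^l = q₁^{k·max(l,0)} · λ₁₂^{k·l} · Z₂^l · Z₁^k`. -/
theorem stmt_12 (q₁ q₂ : ℂ) (hq₁ : q₁ ≠ 0 ∧ q₁ ≠ 1) (hq₂ : q₂ ≠ 0 ∧ q₂ ≠ 1)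
    (lam : ℂˣ) (k l : ℤ) :
    Zword (QW2gen q₁ q₂ lam 0) (QW2gen q₁ q₂ lam 2) k
        * Zword (QW2gen q₁ q₂ lam 1) (QW2gen q₁ q₂ lam 3) l
      = (q₁ ^ (k * max l 0) * (lam : ℂ) ^ (k * l)) •
        (Zword (QW2gen q₁ q₂ lam 1) (QW2gen q₁ q₂ lam 3) l
          * Zword (QW2gen q₁ q₂ lam 0) (QW2gen q₁ q₂ lam 2) k) :=
  stmt_12_general q₁ q₂ hq₁ lam k l
end

section
/- Suppose q_1λ_{12} is a primitive r-th root of unity for some integer r ≥ 1. On the vector space ℂ^r with standard basis v_0, …, v_{r−1} (indices read modulo r), define linear operators X_1 v_k = v_{(k+1) mod r}, X_2 v_k = (q_1λ_{12})^{−k} v_k, Y_1 v_k = (1−q_1)^{−1} v_{(k−1) mod r}, Y_2 = 0. Then: (a) these operators satisfy the six defining relations of A_2^{q̄,Λ} (with 1 read as the identity operator), i.e. X_1X_2 = q_1λ_{12} X_2X_1, Y_1Y_2 = λ_{12} Y_2Y_1, X_1Y_2 = λ_{21} Y_2X_1, X_2Y_1 = q_1λ_{12} Y_1X_2, X_1Y_1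 − q_1 Y_1X_1 = id, X_2Y_2 − q_2 Y_2X_2 = id + (q_1 − 1) Y_1X_1; (b) the only subspaces of ℂ^r invariant under all four operators are 0 and ℂ^r; (c) Y_1X_1 = (1−q_1)^{−1}·id, Y_2X_2 = 0, and X_2 is invertible. -/
private lemma aux_pow_mod (q : ℂ) (r n : ℕ) (h : q ^ r = 1) : q ^ (n % r) = q ^ n := by
  conv_rhs => rw [← Nat.mod_add_div n r]
  rw [pow_add, pow_mul, h, one_pow, mul_one]

private lemma aux_pow_eig {M : Type*} [AddCommGroup M] [Module ℂ M]
    (f : Module.End ℂ M) (c : ℂ) (v : M) (h : f v = c • v) (n : ℕ) :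
    (f ^ n) v = c ^ n • v := by
  induction n with
  | zero => simp
  | succ n ih =>
    rw [pow_succ', Module.End.mul_apply, ih, map_smul, h, smul_smul, ← pow_succ]

private lemma end_ext {r : ℕ} (f g : Module.End ℂ (Fin r → ℂ))
    (h : ∀ k : Fin r, f (Pi.single k 1) = g (Pi.single k 1)) : f = g := by
  apply (Pi.basisFun ℂ (Fin r)).ext; intro k; simpa using h k

private lemma single_smul' {r : ℕ} (i : Fin r) (c : ℂ) :
    (Pi.single i c : Fin r → ℂ) = c • (Pi.single i 1 : Fin r → ℂ) := by
  funext j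
  simp only [Pi.single_apply, Pi.smul_apply, smul_eq_mul]
  split <;> simp

/-- the explicit operators `X₁, X₂, Y₁, Y₂` on `ℂ^r` (with `q₁λ₁₂` a
primitive `r`-th root of unity) satisfy the defining relations of `A₂^{q̄,Λ}`, give a
simple module, and exhibit a proper inner break: `Y₁X₁ = (1−q₁)⁻¹·id`, `Y₂X₂ = 0`,
while `X₂` is invertible. -/
theorem stmt_13 (q₁ q₂ : ℂ) (hq₁ : q₁ ≠ 0 ∧ q₁ ≠ 1) (hq₂ : q₂ ≠ 0 ∧ q₂ ≠ 1)
    (lam : ℂˣ) (r : ℕ) [NeZero r]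
    (hroot : (q₁ * lam) ^ r = 1)
    (hprim : ∀ m : ℕ, 1 ≤ m → m < r → (q₁ * (lam : ℂ)) ^ m ≠ 1)
    (X₁ X₂ Y₁ Y₂ : Module.End ℂ (Fin r → ℂ))
    (hX₁ : ∀ k : Fin r, X₁ (Pi.single k 1) = Pi.single (k + 1) 1)
    (hX₂ : ∀ k : Fin r, X₂ (Pi.single k 1)
      = ((q₁ * (lam : ℂ)) ^ (-(k : ℤ))) • (Pi.single k 1 : Fin r → ℂ))
    (hY₁ : ∀ k : Fin r, Y₁ (Pi.single k 1) = (1 - q₁)⁻¹ • (Pi.single (k - 1) 1 : Fin r → ℂ))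
    (hY₂ : Y₂ = 0) :
    (X₁ * X₂ = (q₁ * (lam : ℂ)) • (X₂ * X₁) ∧
      Y₁ * Y₂ = (lam : ℂ) • (Y₂ * Y₁) ∧
      X₁ * Y₂ = ((lam⁻¹ : ℂˣ) : ℂ) • (Y₂ * X₁) ∧
      X₂ * Y₁ = (q₁ * (lam : ℂ)) • (Y₁ * X₂) ∧
      X₁ * Y₁ - q₁ • (Y₁ * X₁) = 1 ∧
      X₂ * Y₂ - q₂ • (Y₂ * X₂) = 1 + (q₁ - 1) • (Y₁ * X₁)) ∧
    (∀ p : Submodule ℂ (Fin r → ℂ),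
      (∀ x ∈ p, X₁ x ∈ p) → (∀ x ∈ p, X₂ x ∈ p) →
      (∀ x ∈ p, Y₁ x ∈ p) → (∀ x ∈ p, Y₂ x ∈ p) → p = ⊥ ∨ p = ⊤) ∧
    (Y₁ * X₁ = (1 - q₁)⁻¹ • 1 ∧ Y₂ * X₂ = 0 ∧ IsUnit X₂) := by
  set q : ℂ := q₁ * (lam : ℂ) with hqdef
  have hq0 : q ≠ 0 := by
    intro h
    rw [h, zero_pow (NeZero.ne r)] at hroot
    exact zero_ne_one hroot
  have hq1sub : (1 : ℂ) - q₁ ≠ 0 := sub_ne_zero.mpr (Ne.symm hq₁.2)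
  have hqk : ∀ n : ℕ, q ^ (n % r) = q ^ n := fun n => aux_pow_mod q r n hroot
  have hc : ∀ k : Fin r, q ^ (-(k : ℤ)) = (q ^ ((k : ℕ)))⁻¹ := by
    intro k; rw [zpow_neg, zpow_natCast]
  have hX₂' : ∀ k : Fin r, X₂ (Pi.single k 1)
      = (q ^ ((k : ℕ)))⁻¹ • (Pi.single k 1 : Fin r → ℂ) := by
    intro k; rw [hX₂ k, hc]
  have hsucc : ∀ j : Fin r, q ^ (((j + 1 : Fin r) : ℕ)) = q * q ^ ((j : ℕ)) := by
    intro j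
    calc q ^ ((j + 1 : Fin r) : ℕ) = q ^ ((j : ℕ) + ((1 : Fin r) : ℕ)) := by
          rw [Fin.val_add, hqk]
      _ = q ^ (j : ℕ) * q ^ ((1 : Fin r) : ℕ) := pow_add q _ _
      _ = q ^ (j : ℕ) * q := by rw [Fin.val_one', hqk, pow_one]
      _ = q * q ^ (j : ℕ) := mul_comm _ _
  have hcsucc : ∀ k : Fin r, q * (q ^ (((k + 1) : Fin r) : ℕ))⁻¹ = (q ^ ((k : ℕ)))⁻¹ := by
    intro k
    rw [hsucc k, mul_inv, ← mul_assoc, mul_inv_cancel₀ hq0, one_mul]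
  have hcpred : ∀ k : Fin r, (q ^ (((k - 1) : Fin r) : ℕ))⁻¹ = q * (q ^ ((k : ℕ)))⁻¹ := by
    intro k
    have h2 : q ^ ((k : ℕ)) = q * q ^ (((k - 1) : Fin r) : ℕ) := by
      have := hsucc (k - 1)
      rwa [show k - 1 + 1 = k from sub_add_cancel k 1] at this
    rw [h2, mul_inv, ← mul_assoc, mul_inv_cancel₀ hq0, one_mul]
  -- eigenvalues are distinct
  have hdist : ∀ j k : Fin r, q ^ ((j : ℕ)) = q ^ ((k : ℕ)) → j = k := by
    have main : ∀ j k : Fin r, (j : ℕ) ≤ (k : ℕ) → q ^ ((j : ℕ)) = q ^ ((k : ℕ)) → j = k := by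
      intro j k hle h
      have hone : q ^ ((k : ℕ) - (j : ℕ)) = 1 := by
        have hqj : q ^ ((j : ℕ)) ≠ 0 := pow_ne_zero _ hq0
        have : q ^ ((j : ℕ)) * q ^ ((k : ℕ) - (j : ℕ)) = q ^ ((j : ℕ)) * 1 := by
          rw [← pow_add, Nat.add_sub_cancel' hle, mul_one, h]
        exact mul_left_cancel₀ hqj this
      have hd : (k : ℕ) - (j : ℕ) = 0 := by
        by_contra hd0
        exact hprim _ (Nat.one_le_iff_ne_zero.mpr hd0)
          (lt_of_le_of_lt (Nat.sub_le _ _) k.isLt) hone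
      exact Fin.ext (Nat.le_antisymm hle (Nat.le_of_sub_eq_zero hd))
    intro j k h
    rcases le_total (j : ℕ) (k : ℕ) with hle | hle
    · exact main j k hle h
    · exact (main k j hle h.symm).symm
  -- pointwise formula for X₂
  have hX₂x : ∀ (x : Fin r → ℂ) (j : Fin r), X₂ x j = (q ^ ((j : ℕ)))⁻¹ * x j := by
    have hD : X₂ = LinearMap.pi (fun j : Fin r => (q ^ ((j : ℕ)))⁻¹ • LinearMap.proj j) := by
      apply end_ext
      intro k
      rw [hX₂' k]
      funext j
      simp only [LinearMap.pi_apply, LinearMap.smul_apply, LinearMap.proj_apply,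
        Pi.smul_apply, smul_eq_mul, Pi.single_apply]
      by_cases h : j = k <;> simp [h]
    intro x j
    rw [hD]
    simp
  -- (c1) Y₁ X₁
  have hYX : Y₁ * X₁ = (1 - q₁)⁻¹ • 1 := by
    apply end_ext
    intro k
    simp only [Module.End.mul_apply, LinearMap.smul_apply, Module.End.one_apply, hX₁, hY₁]
    rw [show k + 1 - 1 = k from add_sub_cancel_right k 1]
  -- relations
  have R1 : X₁ * X₂ = q • (X₂ * X₁) := by
    apply end_ext
    intro k
    simp only [Module.End.mul_apply, LinearMap.smul_apply, hX₁, hX₂', map_smul, smul_smul]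
    rw [hcsucc]
  have R4 : X₂ * Y₁ = q • (Y₁ * X₂) := by
    apply end_ext
    intro k
    simp only [Module.End.mul_apply, LinearMap.smul_apply, hY₁, hX₂', map_smul, smul_smul]
    congr 1
    rw [hcpred]
    ring
  have R5 : X₁ * Y₁ - q₁ • (Y₁ * X₁) = 1 := by
    apply end_ext
    intro k
    simp only [LinearMap.sub_apply, Module.End.mul_apply, LinearMap.smul_apply,
      Module.End.one_apply, hX₁, hY₁, map_smul]
    rw [show k - 1 + 1 = k from sub_add_cancel k 1, show k + 1 - 1 = k from add_sub_cancel_right k 1, smul_smul, ← sub_smul]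
    have h1 : (1 - q₁)⁻¹ - q₁ * (1 - q₁)⁻¹ = 1 := by
      field_simp
    rw [h1, one_smul]
  have hs1 : (q₁ - 1) * (1 - q₁)⁻¹ = -1 := by
    field_simp
    ring
  have R6 : X₂ * Y₂ - q₂ • (Y₂ * X₂) = 1 + (q₁ - 1) • (Y₁ * X₁) := by
    rw [hY₂, hYX, mul_zero, zero_mul, smul_zero, sub_zero, smul_smul, hs1]
    ext v
    simp
  refine ⟨⟨R1, by rw [hY₂]; simp, by rw [hY₂]; simp, R4, R5, R6⟩, ?_, hYX, by rw [hY₂]; simp, ?_⟩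
  · -- simplicity
    intro p hpX₁ hpX₂ _ _
    by_cases hbot : p = ⊥
    · exact Or.inl hbot
    right
    obtain ⟨x, hxp, hx0⟩ := (Submodule.ne_bot_iff p).mp hbot
    have key : ∀ n : ℕ, ∀ x : Fin r → ℂ, x ∈ p → x ≠ 0 →
        (Finset.univ.filter (fun i => x i ≠ 0)).card ≤ n →
        ∃ k : Fin r, (Pi.single k 1 : Fin r → ℂ) ∈ p := by
      intro n
      induction n with
      | zero =>
        intro x hxp hx0 hcard
        exfalso
        apply hx0
        have hemp : Finset.univ.filter (fun i => x i ≠ 0) = ∅ :=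
          Finset.card_eq_zero.mp (Nat.le_zero.mp hcard)
        funext i
        have hi := Finset.eq_empty_iff_forall_notMem.mp hemp i
        simp only [Finset.mem_filter, Finset.mem_univ, true_and, not_not] at hi
        exact hi
      | succ n ih =>
        intro x hxp hx0 hcard
        obtain ⟨k, hk⟩ : ∃ k, x k ≠ 0 := by
          by_contra h
          push_neg at h
          exact hx0 (funext fun i => h i)
        by_cases hone : ∀ j, j ≠ k → x j = 0
        · refine ⟨k, ?_⟩
          have hx : (Pi.single k 1 : Fin r → ℂ) = (x k)⁻¹ • x := by
            funext j
            by_cases hj : j = k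
            · subst hj; simp [Pi.single_apply, inv_mul_cancel₀ hk]
            · simp [Pi.single_apply, hj, hone j hj]
          rw [hx]
          exact Submodule.smul_mem p _ hxp
        · push_neg at hone
          obtain ⟨k', hk'k, hk'⟩ := hone
          set y : Fin r → ℂ :=
            fun j => ((q ^ ((j : ℕ)))⁻¹ - (q ^ ((k' : ℕ)))⁻¹) * x j with hy
          have hyp : y ∈ p := by
            have h1 : X₂ x - (q ^ ((k' : ℕ)))⁻¹ • x ∈ p :=
              Submodule.sub_mem p (hpX₂ x hxp) (Submodule.smul_mem p _ hxp)
            have heq : y = X₂ x - (q ^ ((k' : ℕ)))⁻¹ • x := by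
              funext j
              simp only [hy, Pi.sub_apply, Pi.smul_apply, smul_eq_mul, hX₂x]
              ring
            rwa [heq]
          have hy0 : y ≠ 0 := by
            intro h
            have hk0 := congrFun h k
            simp only [hy, Pi.zero_apply, mul_eq_zero, sub_eq_zero] at hk0
            rcases hk0 with h' | h'
            · exact hk'k (hdist k' k (inv_injective h').symm)
            · exact hk h'
          have hk'mem : k' ∈ Finset.univ.filter (fun i => x i ≠ 0) := by
            simp [hk']
          have hsub : Finset.univ.filter (fun i => y i ≠ 0)
              ⊆ (Finset.univ.filter (fun i => x i ≠ 0)).erase k' := by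
            intro i hi
            simp only [Finset.mem_filter, Finset.mem_univ, true_and] at hi
            rw [Finset.mem_erase]
            constructor
            · intro hik'
              apply hi
              simp [hy, hik']
            · simp only [Finset.mem_filter, Finset.mem_univ, true_and]
              intro hxi
              apply hi
              simp [hy, hxi]
          have hcard' : (Finset.univ.filter (fun i => y i ≠ 0)).card ≤ n := by
            have h1 := Finset.card_le_card hsub
            rw [Finset.card_erase_of_mem hk'mem] at h1
            omega
          exact ih y hyp hy0 hcard'
    obtain ⟨k, hk⟩ := key _ x hxp hx0 le_rfl
    open Fin.NatCast Fin.CommRing in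
    have hstep : ∀ m : ℕ, (Pi.single (k + (m : Fin r)) 1 : Fin r → ℂ) ∈ p := by
      intro m
      induction m with
      | zero => simpa using hk
      | succ m ih =>
        have h1 := hpX₁ _ ih
        rw [hX₁] at h1
        rwa [show k + ((m + 1 : ℕ) : Fin r) = k + (m : Fin r) + 1 by push_cast; ring]
    open Fin.NatCast Fin.CommRing in
    have hall : ∀ j : Fin r, (Pi.single j 1 : Fin r → ℂ) ∈ p := by
      intro j
      have := hstep ((j - k : Fin r) : ℕ)
      rwa [Fin.cast_val_eq_self, show k + (j - k) = j by ring] at this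
    rw [Submodule.eq_top_iff']
    intro v
    rw [← Finset.univ_sum_single v]
    apply Submodule.sum_mem
    intro i _
    rw [single_smul']
    exact Submodule.smul_mem p _ (hall i)
  · -- X₂ is a unit
    have hXr : X₂ ^ r = 1 := by
      apply end_ext
      intro k
      rw [aux_pow_eig X₂ _ _ (hX₂' k) r]
      have h1 : ((q ^ ((k : ℕ)))⁻¹) ^ r = 1 := by
        rw [inv_pow, ← pow_mul, mul_comm, pow_mul, hroot, one_pow, inv_one]
      rw [h1, one_smul, Module.End.one_apply]

    have hr1 : 1 + (r - 1) = r := by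
      have := Nat.one_le_iff_ne_zero.mpr (NeZero.ne r); omega
    have hmul1 : X₂ * X₂ ^ (r - 1) = 1 := by
      rw [← pow_succ', show r - 1 + 1 = r by omega, hXr]
    have hmul2 : X₂ ^ (r - 1) * X₂ = 1 := by
      rw [← pow_succ, show r - 1 + 1 = r by omega, hXr]
    exact ⟨⟨X₂, X₂ ^ (r - 1), hmul1, hmul2⟩, rfl⟩
end

section
/- Let p ⊆ R be a prime ideal, g ∈ ℤ^n, a ∈ 𝒜(g) and b ∈ 𝒜(−g). If b·a ∈ ι(R) \ ι(p) (note b·a ∈ 𝒜(0) = ι(R) automatically), then a^*·a ∈ ι(R) \ ι(p). -/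
/-!
Write `ι r = b a`, `ι s = a^* a` and `ι t = b^* b` (all three products have degree `0`).
Applying `*` to `b a` gives `a^* b^* = ι r`, so
`ι (r r) = a^* b^* b a = a^* ι(t) a = ι(σ_{-g} t) a^* a = ι(σ_{-g} t · s)`.
Hence `r² ∈ R s`, and `s ∈ p` would force `r ∈ p` since `p` is prime.
-/

theorem Ideal.IsPrime.mem_of_mul_self_eq_mul {R : Type*} [CommRing R] {p : Ideal R}
    (hp : p.IsPrime) {r u s : R} (h : r * r = u * s) (hs : s ∈ p) : r ∈ p :=
  hp.mem_of_pow_mem 2 (sq r ▸ h ▸ p.mul_mem_left u hs)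

theorem mul_mem_range_of_mem_neg {R A F G S : Type*} [Mul A] [FunLike F R A] [AddGroup G]
    [SetLike S A] {𝒜 : G → S}
    (hgmul : ∀ g h : G, ∀ a ∈ 𝒜 g, ∀ b ∈ 𝒜 h, a * b ∈ 𝒜 (g + h)) {ι : F}
    (hrange : (𝒜 0 : Set A) = Set.range ι) {g : G} {x y : A} (hx : x ∈ 𝒜 (-g))
    (hy : y ∈ 𝒜 g) : ∃ s, ι s = x * y := by
  have hxy : x * y ∈ (𝒜 0 : Set A) := neg_add_cancel g ▸ hgmul _ _ _ hx _ hy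
  rwa [hrange] at hxy

theorem map_mul_self_eq_of_antimultiplicative {R A F : Type*} [Semiring R] [Semiring A]
    [FunLike F R A] [RingHomClass F R A] {ι : F} {st : A → A}
    (hst_mul : ∀ x y : A, st (x * y) = st y * st x) (hst_R : ∀ r : R, st (ι r) = ι r)
    {a b : A} {r s t u : R} (hr : b * a = ι r) (hs : st a * a = ι s) (ht : st b * b = ι t)
    (hu : st a * ι t = ι u * st a) : ι (r * r) = ι (u * s) :=
  calc ι (r * r) = st (ι r) * ι r := by rw [map_mul, hst_R]
    _ = st a * (st b * b) * a := by rw [← hr, hst_mul]; simp only [mul_assoc]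
    _ = ι (u * s) := by rw [ht, hu, mul_assoc, hs, map_mul]

theorem stmt_14_general {K A R : Type*} [Field K] [Ring A] [Algebra K A]
    [CommRing R] [Algebra K R]
    (n : ℕ)
    (𝒜 : (Fin n → ℤ) → Submodule K A)
    (hgmul : ∀ g h : Fin n → ℤ, ∀ a ∈ 𝒜 g, ∀ b ∈ 𝒜 h, a * b ∈ 𝒜 (g + h))
    (ι : R →ₐ[K] A) (hinj : Function.Injective ι)
    (hrange : (𝒜 0 : Set A) = Set.range ι)
    (σ : (Fin n → ℤ) → (R ≃ₐ[K] R))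
    (hcomm : ∀ g : Fin n → ℤ, ∀ a ∈ 𝒜 g, ∀ r : R, a * ι r = ι (σ g r) * a)
    (st : A →ₗ[K] A)
    (hst_mul : ∀ x y : A, st (x * y) = st y * st x)
    (hst_grade : ∀ g : Fin n → ℤ, ∀ a ∈ 𝒜 g, st a ∈ 𝒜 (-g))
    (hst_R : ∀ r : R, st (ι r) = ι r)
    (p : Ideal R) (hp : p.IsPrime)
    (g : Fin n → ℤ) (a : A) (ha : a ∈ 𝒜 g) (b : A) (hb : b ∈ 𝒜 (-g))
    (hba : b * a ∈ Set.range ⇑ι \ ⇑ι '' ↑p) :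
    st a * a ∈ Set.range ⇑ι \ ⇑ι '' ↑p := by
  obtain ⟨⟨r, hr⟩, hr_notin⟩ := hba
  have hsa := hst_grade g a ha
  obtain ⟨s, hs⟩ := mul_mem_range_of_mem_neg hgmul hrange hsa ha
  obtain ⟨t, ht⟩ := mul_mem_range_of_mem_neg hgmul hrange (hst_grade (-g) b hb) hb
  have hrr : r * r = σ (-g) t * s := hinj <|
    map_mul_self_eq_of_antimultiplicative hst_mul hst_R hr.symm hs.symm ht.symm
      (hcomm _ _ hsa t)
  refine ⟨⟨s, hs⟩, ?_⟩
  rintro ⟨s', hs'p, hs'⟩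
  exact hr_notin ⟨r, hp.mem_of_mul_self_eq_mul hrr (hinj (hs'.trans hs.symm) ▸ hs'p), hr⟩

/-- Lemma `primestar`: in a `ℤ^n`-graded algebra `A` with degree-zero
subalgebra `ι(R)` and anti-involution `*`, if `p ⊆ R` is prime, `a ∈ 𝒜 g`,
`b ∈ 𝒜 (−g)` and `b·a ∈ ι(R) \ ι(p)`, then `a^*·a ∈ ι(R) \ ι(p)`. -/
theorem stmt_14 {K A R : Type*} [Field K] [Ring A] [Algebra K A]
    [CommRing R] [Algebra K R]
    (n : ℕ) (hn : 1 ≤ n)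
    (𝒜 : (Fin n → ℤ) → Submodule K A)
    (hdirect : DirectSum.IsInternal 𝒜)
    (hone : (1 : A) ∈ 𝒜 0)
    (hgmul : ∀ g h : Fin n → ℤ, ∀ a ∈ 𝒜 g, ∀ b ∈ 𝒜 h, a * b ∈ 𝒜 (g + h))
    (ι : R →ₐ[K] A) (hinj : Function.Injective ι)
    (hrange : (𝒜 0 : Set A) = Set.range ι)
    (σ : (Fin n → ℤ) → (R ≃ₐ[K] R))
    (hσ : ∀ g h : Fin n → ℤ, σ (g + h) = σ g * σ h)
    (hcomm : ∀ g : Fin n → ℤ, ∀ a ∈ 𝒜 g, ∀ r : R, a * ι r = ι (σ g r) * a)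
    (st : A →ₗ[K] A)
    (hst_mul : ∀ x y : A, st (x * y) = st y * st x)
    (hst_invol : ∀ x : A, st (st x) = x)
    (hst_grade : ∀ g : Fin n → ℤ, ∀ a ∈ 𝒜 g, st a ∈ 𝒜 (-g))
    (hst_R : ∀ r : R, st (ι r) = ι r)
    (p : Ideal R) (hp : p.IsPrime)
    (g : Fin n → ℤ) (a : A) (ha : a ∈ 𝒜 g) (b : A) (hb : b ∈ 𝒜 (-g))
    (hba : b * a ∈ Set.range ⇑ι \ ⇑ι '' ↑p) :
    st a * a ∈ Set.range ⇑ι \ ⇑ι '' ↑p :=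
  stmt_14_general n 𝒜 hgmul ι hinj hrange σ hcomm st hst_mul hst_grade hst_R p hp g a ha b hb hba
end

section
/- Let m ⊆ R be a maximal ideal, g ∈ ℤ^n, and suppose a ∈ 𝒜(g) and a' ∈ 𝒜(−g) satisfy a'·a ∈ ι(R) \ ι(m). Then for every b ∈ 𝒜(g) there exist r, r' ∈ R such that b − ι(r)·a ∈ (m) and b − a·ι(r') ∈ (m). In other words, modulo the two-sided ideal (m), the degree-g component 𝒜(g) is spanned over ι(R) (on either side) by the single element a. -/
/-!
Since `a' * a = ι t` with `t ∉ m` and `m` is maximal, `t * u ≡ 1 (mod m)` for some `u`.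
For `b ∈ 𝒜 g` the product `b * a'` has degree `0`, say `b * a' = ι s`; then
`b ≡ b * ι (t * u) = b * a' * a * ι u = ι (s * σ_g u) * a` modulo `(m)`.
The right-handed version follows by moving `ι r` across `a` with `σ_g⁻¹`.
-/

theorem exists_sub_apply_mul_mem_span {R A F : Type*} [CommRing R] [Ring A] [FunLike F R A]
    [RingHomClass F R A] (ι : F) {m : Ideal R} (hm : m.IsMaximal) (τ : R → R)
    {a a' b : A} {s t : R} (hτ : ∀ u, a * ι u = ι (τ u) * a) (ht : a' * a = ι t)
    (htm : t ∉ m) (hs : b * a' = ι s) :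
    ∃ r, b - ι r * a ∈ TwoSidedIdeal.span (ι '' m) := by
  obtain ⟨u, v, hvm, huv⟩ := hm.exists_inv htm
  refine ⟨s * τ u, ?_⟩
  have hv : v = 1 - t * u := by linear_combination huv
  have : b - ι (s * τ u) * a = b * ι v :=
    calc b - ι (s * τ u) * a = b - b * a' * a * ι u := by
          rw [map_mul, mul_assoc, ← hτ, ← hs, ← mul_assoc]
      _ = b * ι v := by rw [mul_assoc b, ht, hv, map_sub, map_one, map_mul]; noncomm_ring
  rw [this]
  exact TwoSidedIdeal.mul_mem_left _ _ _ (TwoSidedIdeal.subset_span ⟨v, hvm, rfl⟩)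

theorem stmt_15_general {K A R : Type*} [Field K] [Ring A] [Algebra K A]
    [CommRing R] [Algebra K R]
    (n : ℕ)
    (𝒜 : (Fin n → ℤ) → Submodule K A)
    (hgmul : ∀ g h : Fin n → ℤ, ∀ a ∈ 𝒜 g, ∀ b ∈ 𝒜 h, a * b ∈ 𝒜 (g + h))
    (ι : R →ₐ[K] A)
    (hrange : (𝒜 0 : Set A) = Set.range ι)
    (σ : (Fin n → ℤ) → (R ≃ₐ[K] R))
    (hcomm : ∀ g : Fin n → ℤ, ∀ a ∈ 𝒜 g, ∀ r : R, a * ι r = ι (σ g r) * a)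
    (m : Ideal R) (hm : m.IsMaximal)
    (g : Fin n → ℤ) (a : A) (ha : a ∈ 𝒜 g) (a' : A) (ha' : a' ∈ 𝒜 (-g))
    (haa : a' * a ∈ Set.range ⇑ι \ ⇑ι '' ↑m) :
    ∀ b ∈ 𝒜 g, ∃ r r' : R,
      b - ι r * a ∈ TwoSidedIdeal.span (⇑ι '' ↑m) ∧
      b - a * ι r' ∈ TwoSidedIdeal.span (⇑ι '' ↑m) := by
  intro b hb
  obtain ⟨⟨t, ht⟩, hnot⟩ := haa
  have htm : t ∉ m := fun h => hnot ⟨t, h, ht⟩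
  have hba : b * a' ∈ (𝒜 0 : Set A) := by simpa using hgmul g (-g) b hb a' ha'
  rw [hrange] at hba
  obtain ⟨s, hs⟩ := hba
  obtain ⟨r, hr⟩ := exists_sub_apply_mul_mem_span ι hm (σ g) (hcomm g a ha) ht.symm htm hs.symm
  refine ⟨r, (σ g).symm r, hr, ?_⟩
  rwa [hcomm g a ha, AlgEquiv.apply_symm_apply]

/-- Lemma `dim`: in a `ℤ^n`-graded algebra `A` with degree-zero
subalgebra `ι(R)`, if `m ⊆ R` is maximal, `a ∈ 𝒜 g`, `a' ∈ 𝒜 (−g)` and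
`a'·a ∈ ι(R) \ ι(m)`, then modulo the two-sided ideal generated by `ι(m)`, every
`b ∈ 𝒜 g` is an `ι(R)`-multiple (on either side) of `a`. -/
theorem stmt_15 {K A R : Type*} [Field K] [Ring A] [Algebra K A]
    [CommRing R] [Algebra K R]
    (n : ℕ) (hn : 1 ≤ n)
    (𝒜 : (Fin n → ℤ) → Submodule K A)
    (hdirect : DirectSum.IsInternal 𝒜)
    (hone : (1 : A) ∈ 𝒜 0)
    (hgmul : ∀ g h : Fin n → ℤ, ∀ a ∈ 𝒜 g, ∀ b ∈ 𝒜 h, a * b ∈ 𝒜 (g + h))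
    (ι : R →ₐ[K] A) (hinj : Function.Injective ι)
    (hrange : (𝒜 0 : Set A) = Set.range ι)
    (σ : (Fin n → ℤ) → (R ≃ₐ[K] R))
    (hσ : ∀ g h : Fin n → ℤ, σ (g + h) = σ g * σ h)
    (hcomm : ∀ g : Fin n → ℤ, ∀ a ∈ 𝒜 g, ∀ r : R, a * ι r = ι (σ g r) * a)
    (m : Ideal R) (hm : m.IsMaximal)
    (g : Fin n → ℤ) (a : A) (ha : a ∈ 𝒜 g) (a' : A) (ha' : a' ∈ 𝒜 (-g))
    (haa : a' * a ∈ Set.range ⇑ι \ ⇑ι '' ↑m) :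
    ∀ b ∈ 𝒜 g, ∃ r r' : R,
      b - ι r * a ∈ TwoSidedIdeal.span (⇑ι '' ↑m) ∧
      b - a * ι r' ∈ TwoSidedIdeal.span (⇑ι '' ↑m) :=
  stmt_15_general n 𝒜 hgmul ι hrange σ hcomm m hm g a ha a' ha' haa
end

section
/- Let m ⊆ R be a prime ideal, and let g, h ∈ ℤ^n with σ_h(m) = m. Suppose a ∈ 𝒜(g) and b ∈ 𝒜(h) satisfy a^*·a ∈ ι(R) \ ι(m) and b^*·b ∈ ι(R) \ ι(m). Then (a·b^*)^* · (a·b^*) ∈ ι(R) \ ι(m). In particular, b·b^* ∈ ι(R) \ ι(m). -/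
/-! The degree-zero elements `s := b^* b` and `t := b b^*` satisfy `s² = σ_{-h}(t) s`
(from `b^* (b b^*) b = b^* t b` and commuting `t` past `b^*`), so `s ∉ m` forces
`t ∉ m` because `σ_{-h}` preserves `m`. Similarly `(a b^*)^* (a b^*) = b (a^* a) b^*
= σ_h(r) t` with `r := a^* a ∉ m`, and `σ_h(r) t ∉ m` by primality. -/

theorem map_add_neg_eq_one {G M : Type*} [AddGroup G] [Group M] {σ : G → M}
    (hσ : ∀ g h, σ (g + h) = σ g * σ h) (h : G) : σ h * σ (-h) = 1 := by
  have hσ0 : σ 0 = 1 := left_eq_mul.mp (by simpa only [add_zero] using hσ 0 0)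
  rw [← hσ, add_neg_cancel, hσ0]

theorem Ideal.apply_mem_iff_of_map_eq {R E : Type*} [CommRing R] [EquivLike E R R]
    [RingEquivClass E R R] {e : E} {m : Ideal R} (hfix : m.map e = m) {x : R} :
    e x ∈ m ↔ x ∈ m := by
  conv_lhs => rw [← hfix]
  rw [Ideal.mem_map_of_equiv]
  exact ⟨fun ⟨y, hy, hyx⟩ => EquivLike.injective e hyx ▸ hy, fun hx => ⟨x, hx, rfl⟩⟩

theorem Function.Injective.apply_mem_range_sdiff_image_iff {α β : Type*} {f : α → β}
    (hf : Function.Injective f) (s : Set α) (x : α) :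
    f x ∈ Set.range f \ f '' s ↔ x ∉ s := by
  rw [Set.range_sdiff_image hf, hf.mem_set_image, Set.mem_compl_iff]

theorem mul_self_eq_of_mul_eq {R A F : Type*} [CommRing R] [Ring A] [FunLike F R A]
    [RingHomClass F R A] {ι : F} (hinj : Function.Injective ι) {τ : R → R} {b b' : A}
    {s t : R} (hs : b' * b = ι s) (ht : b * b' = ι t) (hcomm : b' * ι t = ι (τ t) * b') :
    s * s = τ t * s :=
  hinj <| by
    calc ι (s * s) = b' * (b * b') * b := by rw [map_mul, ← hs]; noncomm_ring
      _ = ι (τ t * s) := by rw [ht, hcomm, mul_assoc, hs, map_mul]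

theorem stmt_16_general {K A R : Type*} [Field K] [Ring A] [Algebra K A]
    [CommRing R] [Algebra K R]
    (n : ℕ)
    (𝒜 : (Fin n → ℤ) → Submodule K A)
    (hgmul : ∀ g h : Fin n → ℤ, ∀ a ∈ 𝒜 g, ∀ b ∈ 𝒜 h, a * b ∈ 𝒜 (g + h))
    (ι : R →ₐ[K] A) (hinj : Function.Injective ι)
    (hrange : (𝒜 0 : Set A) = Set.range ι)
    (σ : (Fin n → ℤ) → (R ≃ₐ[K] R))
    (hσ : ∀ g h : Fin n → ℤ, σ (g + h) = σ g * σ h)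
    (hcomm : ∀ g : Fin n → ℤ, ∀ a ∈ 𝒜 g, ∀ r : R, a * ι r = ι (σ g r) * a)
    (st : A →ₗ[K] A)
    (hst_mul : ∀ x y : A, st (x * y) = st y * st x)
    (hst_invol : ∀ x : A, st (st x) = x)
    (hst_grade : ∀ g : Fin n → ℤ, ∀ a ∈ 𝒜 g, st a ∈ 𝒜 (-g))
    (m : Ideal R) (hm : m.IsPrime)
    (g h : Fin n → ℤ) (hfix : Ideal.map (σ h) m = m)
    (a : A) (haa : st a * a ∈ Set.range ⇑ι \ ⇑ι '' ↑m)
    (b : A) (hb : b ∈ 𝒜 h) (hbb : st b * b ∈ Set.range ⇑ι \ ⇑ι '' ↑m) :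
    st (a * st b) * (a * st b) ∈ Set.range ⇑ι \ ⇑ι '' ↑m ∧
    b * st b ∈ Set.range ⇑ι \ ⇑ι '' ↑m := by
  obtain ⟨r, hr⟩ := haa.1
  obtain ⟨s, hs⟩ := hbb.1
  rw [← hr, hinj.apply_mem_range_sdiff_image_iff] at haa
  rw [← hs, hinj.apply_mem_range_sdiff_image_iff] at hbb
  have hb' : st b ∈ 𝒜 (-h) := hst_grade h b hb
  obtain ⟨t, ht⟩ : b * st b ∈ Set.range ι := by
    rw [← hrange]
    simpa only [add_neg_cancel, SetLike.mem_coe] using hgmul h (-h) b hb (st b) hb'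
  have hss : s * s = σ (-h) t * s :=
    mul_self_eq_of_mul_eq hinj hs.symm ht.symm (hcomm (-h) (st b) hb' t)
  have htm : t ∉ m := by
    intro htm
    have hσt : σ (-h) t ∈ m := by
      rwa [← Ideal.apply_mem_iff_of_map_eq hfix, ← AlgEquiv.mul_apply,
        map_add_neg_eq_one hσ, AlgEquiv.one_apply]
    exact hbb ((hm.mem_or_mem (hss ▸ m.mul_mem_right s hσt)).elim id id)
  have hab : st (a * st b) * (a * st b) = ι (σ h r * t) := by
    calc st (a * st b) * (a * st b) = b * (st a * a) * st b := by
          rw [hst_mul, hst_invol]; noncomm_ring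
      _ = ι (σ h r * t) := by rw [← hr, hcomm h b hb, mul_assoc, ← ht, map_mul]
  rw [hab, ← ht, hinj.apply_mem_range_sdiff_image_iff, hinj.apply_mem_range_sdiff_image_iff]
  exact ⟨hm.mul_notMem (fun h' => haa ((Ideal.apply_mem_iff_of_map_eq hfix).mp h')) htm, htm⟩

/-- Lemma `NBabc` part (a): in a `ℤ^n`-graded algebra with degree-zero
subalgebra `ι(R)` and anti-involution `*`, if `m` is prime with `σ_h(m) = m`,
`a ∈ 𝒜 g`, `b ∈ 𝒜 h`, `a^*a ∉ ι(m)` and `b^*b ∉ ι(m)`, then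
`(a b^*)^*(a b^*) ∉ ι(m)`; in particular `b b^* ∉ ι(m)`. -/
theorem stmt_16 {K A R : Type*} [Field K] [Ring A] [Algebra K A]
    [CommRing R] [Algebra K R]
    (n : ℕ) (hn : 1 ≤ n)
    (𝒜 : (Fin n → ℤ) → Submodule K A)
    (hdirect : DirectSum.IsInternal 𝒜)
    (hone : (1 : A) ∈ 𝒜 0)
    (hgmul : ∀ g h : Fin n → ℤ, ∀ a ∈ 𝒜 g, ∀ b ∈ 𝒜 h, a * b ∈ 𝒜 (g + h))
    (ι : R →ₐ[K] A) (hinj : Function.Injective ι)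
    (hrange : (𝒜 0 : Set A) = Set.range ι)
    (σ : (Fin n → ℤ) → (R ≃ₐ[K] R))
    (hσ : ∀ g h : Fin n → ℤ, σ (g + h) = σ g * σ h)
    (hcomm : ∀ g : Fin n → ℤ, ∀ a ∈ 𝒜 g, ∀ r : R, a * ι r = ι (σ g r) * a)
    (st : A →ₗ[K] A)
    (hst_mul : ∀ x y : A, st (x * y) = st y * st x)
    (hst_invol : ∀ x : A, st (st x) = x)
    (hst_grade : ∀ g : Fin n → ℤ, ∀ a ∈ 𝒜 g, st a ∈ 𝒜 (-g))
    (hst_R : ∀ r : R, st (ι r) = ι r)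
    (m : Ideal R) (hm : m.IsPrime)
    (g h : Fin n → ℤ) (hfix : Ideal.map (σ h) m = m)
    (a : A) (ha : a ∈ 𝒜 g) (haa : st a * a ∈ Set.range ⇑ι \ ⇑ι '' ↑m)
    (b : A) (hb : b ∈ 𝒜 h) (hbb : st b * b ∈ Set.range ⇑ι \ ⇑ι '' ↑m) :
    st (a * st b) * (a * st b) ∈ Set.range ⇑ι \ ⇑ι '' ↑m ∧
    b * st b ∈ Set.range ⇑ι \ ⇑ι '' ↑m :=
  stmt_16_general n 𝒜 hgmul ι hinj hrange σ hσ hcomm st hst_mul hst_invol hst_grade m hm g h hfix a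
    haa b hb hbb
end

section
/- Let m ⊆ R be a maximal ideal, and let g, h ∈ ℤ^n with σ_h(m) = m. Suppose a ∈ 𝒜(g) and b ∈ 𝒜(h) satisfy a^*·a ∈ ι(R) \ ι(m) and b^*·b ∈ ι(R) \ ι(m). Then, writing φ_m : A → A/(m) for the quotient map, the K-span of {φ_m(x)·φ_m(y) : x ∈ 𝒜(g), y ∈ 𝒜(h)} equals φ_m(𝒜(g+h)). -/
/-!
Given `c ∈ 𝒜(g+h)`, write `b^*b = ι t` with `t ∉ m` and pick `t'` inverting `t` modulo the
maximal ideal `m`. Then `c = (c b^*) (b ι t') - c ι (t t' - 1)` with `c b^* ∈ 𝒜 g`,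
`b ι t' ∈ 𝒜 h`, and the last term dies in `A/(m)`.
-/

/-- The quotient map `A → A/(s)` by the two-sided ideal generated by `s`, as a
morphism of `K`-algebras. -/
def quotAlgHom {K A : Type*} [Field K] [Ring A] [Algebra K A] (s : Set A) :
    A →ₐ[K] (TwoSidedIdeal.span s).ringCon.Quotient :=
  AlgHom.mk' (TwoSidedIdeal.span s).ringCon.mk' fun _ _ => rfl

section QuotAlgHom

variable {K A : Type*} [Field K] [Ring A] [Algebra K A]

lemma quotAlgHom_eq_zero_of_mem (s : Set A) {x : A} (hx : x ∈ s) :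
    quotAlgHom (K := K) s x = 0 :=
  (RingCon.eq _).2 ((TwoSidedIdeal.mem_iff _ _).1 (TwoSidedIdeal.subset_span hx))

lemma quotAlgHom_map_eq_one_of_sub_one_mem {R : Type*} [CommRing R] [Algebra K R]
    (f : R →ₐ[K] A) (I : Ideal R) {r : R} (hr : r - 1 ∈ I) :
    quotAlgHom (K := K) (f '' I) (f r) = 1 := by
  have := quotAlgHom_eq_zero_of_mem (K := K) (f '' I) ⟨r - 1, hr, rfl⟩
  rwa [map_sub, map_one, map_sub, map_one, sub_eq_zero] at this

end QuotAlgHom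

theorem quotAlgHom_mem_span_mul_of_mul_eq_of_notMem {K A R G : Type*} [Field K] [Ring A]
    [Algebra K A] [CommRing R] [Algebra K R] [AddGroup G]
    (𝒜 : G → Submodule K A)
    (hgmul : ∀ g h : G, ∀ a ∈ 𝒜 g, ∀ b ∈ 𝒜 h, a * b ∈ 𝒜 (g + h))
    (ι : R →ₐ[K] A) (hι : ∀ r, ι r ∈ 𝒜 0)
    (m : Ideal R) (hm : m.IsMaximal) {g h : G} {b b' : A} (hb : b ∈ 𝒜 h)
    (hb' : b' ∈ 𝒜 (-h)) {t : R} (ht : b' * b = ι t) (htm : t ∉ m)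
    {c : A} (hc : c ∈ 𝒜 (g + h)) :
    quotAlgHom (K := K) (ι '' m) c ∈ Submodule.span K
      {z | ∃ x ∈ 𝒜 g, ∃ y ∈ 𝒜 h,
        z = quotAlgHom (K := K) (ι '' m) x * quotAlgHom (K := K) (ι '' m) y} := by
  obtain ⟨t', i, hi, hti⟩ := hm.exists_inv htm
  have hunit : quotAlgHom (K := K) (ι '' m) (ι (t * t')) = 1 :=
    quotAlgHom_map_eq_one_of_sub_one_mem ι m <| by
      rw [show t * t' - 1 = -i by linear_combination hti]
      exact m.neg_mem hi
  refine Submodule.subset_span ⟨c * b', add_neg_cancel_right g h ▸ hgmul _ _ c hc b' hb',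
    b * ι t', add_zero h ▸ hgmul _ _ b hb _ (hι t'), ?_⟩
  rw [← map_mul, show c * b' * (b * ι t') = c * ι (t * t') by
    rw [map_mul, ← ht]; noncomm_ring, map_mul, hunit, mul_one]

theorem stmt_17_general {K A R : Type*} [Field K] [Ring A] [Algebra K A]
    [CommRing R] [Algebra K R]
    (n : ℕ)
    (𝒜 : (Fin n → ℤ) → Submodule K A)
    (hgmul : ∀ g h : Fin n → ℤ, ∀ a ∈ 𝒜 g, ∀ b ∈ 𝒜 h, a * b ∈ 𝒜 (g + h))
    (ι : R →ₐ[K] A)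
    (hrange : (𝒜 0 : Set A) = Set.range ι)
    (st : A →ₗ[K] A)
    (hst_grade : ∀ g : Fin n → ℤ, ∀ a ∈ 𝒜 g, st a ∈ 𝒜 (-g))
    (m : Ideal R) (hm : m.IsMaximal)
    (g h : Fin n → ℤ)
    (a : A)
    (b : A) (hb : b ∈ 𝒜 h) (hbb : st b * b ∈ Set.range ⇑ι \ ⇑ι '' ↑m) :
    Submodule.span K {z : (TwoSidedIdeal.span (⇑ι '' ↑m)).ringCon.Quotient |
        ∃ x ∈ 𝒜 g, ∃ y ∈ 𝒜 h,
          z = quotAlgHom (K := K) (⇑ι '' ↑m) x * quotAlgHom (K := K) (⇑ι '' ↑m) y}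
      = Submodule.map (quotAlgHom (K := K) (A := A) (⇑ι '' ↑m)).toLinearMap
          (𝒜 (g + h)) := by
  refine le_antisymm (Submodule.span_le.2 ?_) ?_
  · rintro _ ⟨x, hx, y, hy, rfl⟩
    exact ⟨x * y, hgmul g h x hx y hy, map_mul (quotAlgHom _) x y⟩
  · rintro _ ⟨c, hc, rfl⟩
    obtain ⟨⟨t, ht⟩, htm⟩ := hbb
    have hι : ∀ r, ι r ∈ 𝒜 0 := fun r => by
      rw [← SetLike.mem_coe, hrange]
      exact Set.mem_range_self r
    exact quotAlgHom_mem_span_mul_of_mul_eq_of_notMem 𝒜 hgmul ι hι m hm hb (hst_grade h b hb)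
      ht.symm (fun htm' => htm ⟨t, htm', ht⟩) hc

/-- Lemma `NBabc` part (b): with `m` maximal, `σ_h(m) = m`,
`a ∈ 𝒜 g`, `b ∈ 𝒜 h`, `a^*a ∉ ι(m)`, `b^*b ∉ ι(m)`, the `K`-span of
`{φ_m(x)·φ_m(y) : x ∈ 𝒜 g, y ∈ 𝒜 h}` equals `φ_m(𝒜 (g+h))` in `A/(m)`. -/
theorem stmt_17 {K A R : Type*} [Field K] [Ring A] [Algebra K A]
    [CommRing R] [Algebra K R]
    (n : ℕ) (hn : 1 ≤ n)
    (𝒜 : (Fin n → ℤ) → Submodule K A)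
    (hdirect : DirectSum.IsInternal 𝒜)
    (hone : (1 : A) ∈ 𝒜 0)
    (hgmul : ∀ g h : Fin n → ℤ, ∀ a ∈ 𝒜 g, ∀ b ∈ 𝒜 h, a * b ∈ 𝒜 (g + h))
    (ι : R →ₐ[K] A) (hinj : Function.Injective ι)
    (hrange : (𝒜 0 : Set A) = Set.range ι)
    (σ : (Fin n → ℤ) → (R ≃ₐ[K] R))
    (hσ : ∀ g h : Fin n → ℤ, σ (g + h) = σ g * σ h)
    (hcomm : ∀ g : Fin n → ℤ, ∀ a ∈ 𝒜 g, ∀ r : R, a * ι r = ι (σ g r) * a)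
    (st : A →ₗ[K] A)
    (hst_mul : ∀ x y : A, st (x * y) = st y * st x)
    (hst_invol : ∀ x : A, st (st x) = x)
    (hst_grade : ∀ g : Fin n → ℤ, ∀ a ∈ 𝒜 g, st a ∈ 𝒜 (-g))
    (hst_R : ∀ r : R, st (ι r) = ι r)
    (m : Ideal R) (hm : m.IsMaximal)
    (g h : Fin n → ℤ) (hfix : Ideal.map (σ h) m = m)
    (a : A) (ha : a ∈ 𝒜 g) (haa : st a * a ∈ Set.range ⇑ι \ ⇑ι '' ↑m)
    (b : A) (hb : b ∈ 𝒜 h) (hbb : st b * b ∈ Set.range ⇑ι \ ⇑ι '' ↑m) :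
    Submodule.span K {z : (TwoSidedIdeal.span (⇑ι '' ↑m)).ringCon.Quotient |
        ∃ x ∈ 𝒜 g, ∃ y ∈ 𝒜 h,
          z = quotAlgHom (K := K) (⇑ι '' ↑m) x * quotAlgHom (K := K) (⇑ι '' ↑m) y}
      = Submodule.map (quotAlgHom (K := K) (A := A) (⇑ι '' ↑m)).toLinearMap
          (𝒜 (g + h)) :=
  stmt_17_general n 𝒜 hgmul ι hrange st hst_grade m hm g h a b hb hbb
end

section
/- Let m ⊆ R be a maximal ideal and g ∈ ℤ^n with σ_g(m) = m. Suppose a ∈ 𝒜(g) and a' ∈ 𝒜(−g) satisfy a'·a ∈ ι(R) \ ι(m). Then the image φ_m(a) of a in the quotient algebra A/(m) is a unit (it has a two-sided inverse in A/(m)). -/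
theorem quotAlgHom_apply_eq_zero {K A : Type*} [Field K] [Ring A] [Algebra K A] {s : Set A}
    {x : A} (hx : x ∈ s) : quotAlgHom (K := K) s x = 0 :=
  (TwoSidedIdeal.span s).ringCon.eq.mpr <|
    (TwoSidedIdeal.mem_iff _ _).mp (TwoSidedIdeal.subset_span hx)

section KernelAboveMaximal

variable {R Q : Type*} [CommRing R] [Ring Q] {ψ : R →+* Q} {m : Ideal R}

theorem exists_map_mul_eq_one_of_notMem (hm : m.IsMaximal) (hker : m ≤ RingHom.ker ψ)
    {r : R} (hr : r ∉ m) : ∃ s, ψ s * ψ r = 1 := by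
  obtain ⟨s, c, hc, hsc⟩ := hm.exists_inv hr
  refine ⟨s, ?_⟩
  rw [← map_mul, ← map_one ψ, ← hsc, map_add, hker hc, add_zero]

theorem map_eq_zero_or_one_of_isIdempotentElem (hm : m.IsMaximal) (hker : m ≤ RingHom.ker ψ)
    {t : R} (ht : IsIdempotentElem (ψ t)) : ψ t = 0 ∨ ψ t = 1 := by
  rcases eq_or_ne (RingHom.ker ψ) ⊤ with htop | hne
  · exact Or.inl (htop ▸ Submodule.mem_top : t ∈ RingHom.ker ψ)
  · have hprime : (RingHom.ker ψ).IsPrime := hm.eq_of_le hne hker ▸ hm.isPrime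
    have hmem : t * (t - 1) ∈ RingHom.ker ψ := by
      rw [RingHom.mem_ker, map_mul, map_sub, map_one, mul_sub, mul_one, ht.eq, sub_self]
    rcases hprime.mem_or_mem hmem with h | h
    · exact Or.inl h
    · exact Or.inr (sub_eq_zero.mp (by rwa [RingHom.mem_ker, map_sub, map_one] at h))

theorem isUnit_of_mul_eq_one_of_mul_eq_map (hm : m.IsMaximal) (hker : m ≤ RingHom.ker ψ)
    {x z : Q} {t : R} (hzx : z * x = 1) (hxz : x * z = ψ t) : IsUnit x := by
  have hidem : IsIdempotentElem (ψ t) := by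
    rw [IsIdempotentElem, ← hxz, mul_assoc, ← mul_assoc z, hzx, one_mul]
  rcases map_eq_zero_or_one_of_isIdempotentElem hm hker hidem with h0 | h1
  · have hx : x = 0 := by rw [← mul_one x, ← hzx, ← mul_assoc, hxz, h0, zero_mul]
    have : Subsingleton Q := subsingleton_of_zero_eq_one (by rw [← hzx, hx, mul_zero])
    exact isUnit_of_subsingleton x
  · exact ⟨⟨x, z, hxz.trans h1, hzx⟩, rfl⟩

end KernelAboveMaximal

theorem stmt_18_general {K A R : Type*} [Field K] [Ring A] [Algebra K A]
    [CommRing R] [Algebra K R]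
    (n : ℕ)
    (𝒜 : (Fin n → ℤ) → Submodule K A)
    (hgmul : ∀ g h : Fin n → ℤ, ∀ a ∈ 𝒜 g, ∀ b ∈ 𝒜 h, a * b ∈ 𝒜 (g + h))
    (ι : R →ₐ[K] A)
    (hrange : (𝒜 0 : Set A) = Set.range ι)
    (σ : (Fin n → ℤ) → (R ≃ₐ[K] R))
    (hcomm : ∀ g : Fin n → ℤ, ∀ a ∈ 𝒜 g, ∀ r : R, a * ι r = ι (σ g r) * a)
    (m : Ideal R) (hm : m.IsMaximal)
    (g : Fin n → ℤ)
    (a : A) (ha : a ∈ 𝒜 g) (a' : A) (ha' : a' ∈ 𝒜 (-g))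
    (haa : a' * a ∈ Set.range ⇑ι \ ⇑ι '' ↑m) :
    IsUnit (quotAlgHom (K := K) (⇑ι '' ↑m) a) := by
  set φ := quotAlgHom (K := K) (⇑ι '' ↑m)
  set ψ : R →+* _ := (φ.comp ι).toRingHom
  have hker : m ≤ RingHom.ker ψ := fun c hc => quotAlgHom_apply_eq_zero (K := K) ⟨c, hc, rfl⟩
  obtain ⟨⟨r, hr⟩, haa_notMem⟩ := haa
  have hr_notMem : r ∉ m := fun h => haa_notMem ⟨r, h, hr⟩
  obtain ⟨r₂, hr₂⟩ : a * a' ∈ Set.range ι := hrange ▸ by simpa using hgmul g (-g) a ha a' ha'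
  obtain ⟨s, hs⟩ := exists_map_mul_eq_one_of_notMem hm hker hr_notMem
  refine isUnit_of_mul_eq_one_of_mul_eq_map (t := σ g s * r₂) (z := ψ s * φ a') hm hker ?_ ?_
  · change φ (ι s) * φ a' * φ a = 1
    rw [mul_assoc, ← map_mul φ a', ← hr]
    exact hs
  · change φ a * (φ (ι s) * φ a') = φ (ι (σ g s * r₂))
    rw [← map_mul, ← map_mul, ← mul_assoc, hcomm g a ha s, mul_assoc, ← hr₂, map_mul ι]

/-- invertibility in Theorem `varphibmstruct1`(b): if `m` is maximal,
`σ_g(m) = m`, `a ∈ 𝒜 g`, `a' ∈ 𝒜 (−g)` and `a'·a ∈ ι(R) \ ι(m)`, then the image of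
`a` in `A/(m)` is a unit. -/
theorem stmt_18 {K A R : Type*} [Field K] [Ring A] [Algebra K A]
    [CommRing R] [Algebra K R]
    (n : ℕ) (hn : 1 ≤ n)
    (𝒜 : (Fin n → ℤ) → Submodule K A)
    (hdirect : DirectSum.IsInternal 𝒜)
    (hone : (1 : A) ∈ 𝒜 0)
    (hgmul : ∀ g h : Fin n → ℤ, ∀ a ∈ 𝒜 g, ∀ b ∈ 𝒜 h, a * b ∈ 𝒜 (g + h))
    (ι : R →ₐ[K] A) (hinj : Function.Injective ι)
    (hrange : (𝒜 0 : Set A) = Set.range ι)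
    (σ : (Fin n → ℤ) → (R ≃ₐ[K] R))
    (hσ : ∀ g h : Fin n → ℤ, σ (g + h) = σ g * σ h)
    (hcomm : ∀ g : Fin n → ℤ, ∀ a ∈ 𝒜 g, ∀ r : R, a * ι r = ι (σ g r) * a)
    (m : Ideal R) (hm : m.IsMaximal)
    (g : Fin n → ℤ) (hfix : Ideal.map (σ g) m = m)
    (a : A) (ha : a ∈ 𝒜 g) (a' : A) (ha' : a' ∈ 𝒜 (-g))
    (haa : a' * a ∈ Set.range ⇑ι \ ⇑ι '' ↑m) :
    IsUnit (quotAlgHom (K := K) (⇑ι '' ↑m) a) :=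
  stmt_18_general n 𝒜 hgmul ι hrange σ hcomm m hm g a ha a' ha' haa
end
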